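/- arXiv:1404.4708 — 12 statements merged into one kernel-verified Lean document; each statement's English description precedes it below -/
import Mathlib

section
/- Let X and Y be Banach spaces over ℂ, S : X → Y and T : Y → X bounded linear operators such that (S,T) is a Fredholm pair. Then R(S) and N(T) + R(S) are closed subspaces of Y, and R(T) and N(S) + R(T) are closed subspaces of X. -/
open Module

/-- The space `A / (A ∩ B)` for submodules `A B` of a module, realized as the quotient of `A`
by the preimage of `B` under the inclusion of `A`. -/
abbrev relQuot {X : Type*} [AddCommGroup X] [Module ℂ X] (A B : Submodule ℂ X) : Type _ :=
  ↥A ⧸ (B.comap A.subtype)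

/-- The dimension of `A / (A ∩ B)`. -/
noncomputable def relDim {X : Type*} [AddCommGroup X] [Module ℂ X] (A B : Submodule ℂ X) : ℕ :=
  finrank ℂ (relQuot A B)

/-- `(S, T)` is a Fredholm pair: the four quotients `N(S)/(N(S) ∩ R(T))`,
`R(T)/(N(S) ∩ R(T))`, `N(T)/(N(T) ∩ R(S))` and `R(S)/(N(T) ∩ R(S))` are all
finite dimensional. -/
def IsFredholmPair {X Y : Type*} [SeminormedAddCommGroup X] [NormedSpace ℂ X]
    [SeminormedAddCommGroup Y] [NormedSpace ℂ Y] (S : X →L[ℂ] Y) (T : Y →L[ℂ] X) : Prop :=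
  FiniteDimensional ℂ (relQuot (LinearMap.ker (S : X →ₗ[ℂ] Y)) (LinearMap.range (T : Y →ₗ[ℂ] X))) ∧
  FiniteDimensional ℂ (relQuot (LinearMap.range (T : Y →ₗ[ℂ] X)) (LinearMap.ker (S : X →ₗ[ℂ] Y))) ∧
  FiniteDimensional ℂ (relQuot (LinearMap.ker (T : Y →ₗ[ℂ] X)) (LinearMap.range (S : X →ₗ[ℂ] Y))) ∧
  FiniteDimensional ℂ (relQuot (LinearMap.range (S : X →ₗ[ℂ] Y)) (LinearMap.ker (T : Y →ₗ[ℂ] X)))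

/-! If `N` is closed and `A/(A ∩ N)` is finite dimensional, then `N + A` is the preimage of the
finite-dimensional image of `A` in the quotient by `N`, hence closed. With `N = N(T)` and
`A = R(S)` this gives `N(T) + R(S)`; with `N = N(T) ∩ R(S)` it gives `R(S)`, once `N(T) ∩ R(S)` is
known to be closed. That is where completeness enters: `N(T) ∩ R(S)` is the range of the
restriction `S⁻¹(N(T)) → N(T)` of `S`, which has finite codimension in `N(T)`, and an operator
between Banach spaces with finite-codimensional range has closed range (open mapping theorem for
the injective map it induces on the quotient by its kernel). Exchanging `S` and `T` gives the rest.
-/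

section TopologicalVectorSpace

variable {𝕜 E : Type*} [NontriviallyNormedField 𝕜] [CompleteSpace 𝕜]
  [AddCommGroup E] [TopologicalSpace E] [IsTopologicalAddGroup E] [Module 𝕜 E]
  [ContinuousSMul 𝕜 E]

theorem Submodule.isClosed_sup_of_finiteDimensional_quotient_comap {N A : Submodule 𝕜 E}
    (hN : IsClosed (N : Set E)) [FiniteDimensional 𝕜 (A ⧸ N.comap A.subtype)] :
    IsClosed ((N ⊔ A : Submodule 𝕜 E) : Set E) := by
  have : IsClosed (N : Set E) := hN
  have hker : LinearMap.ker (N.mkQ ∘ₗ A.subtype) = N.comap A.subtype := by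
    ext; simp
  have hrange : LinearMap.range (N.mkQ ∘ₗ A.subtype) = A.map N.mkQ := by
    rw [LinearMap.range_comp, Submodule.range_subtype]
  have : FiniteDimensional 𝕜 (A.map N.mkQ) := by
    rw [← hrange]
    exact ((Submodule.quotEquivOfEq _ _ hker).symm.trans
      (N.mkQ ∘ₗ A.subtype).quotKerEquivRange).finiteDimensional
  rw [← Submodule.comap_map_mkQ]
  exact (A.map N.mkQ).closed_of_finiteDimensional.preimage continuous_quot_mk

end TopologicalVectorSpace

namespace ContinuousLinearMap

variable {𝕜 E F : Type*} [NontriviallyNormedField 𝕜] [CompleteSpace 𝕜]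
  [NormedAddCommGroup E] [NormedSpace 𝕜 E] [CompleteSpace E]
  [NormedAddCommGroup F] [NormedSpace 𝕜 F] [CompleteSpace F]

theorem isClosed_range_of_finiteDimensional_quotient (f : E →L[𝕜] F)
    [FiniteDimensional 𝕜 (F ⧸ f.range)] : IsClosed (f.range : Set F) := by
  have : IsClosed (f.ker : Set E) := f.isClosed_ker
  set g := f.ker.liftQL f le_rfl
  have hg : g.range = f.range := Submodule.range_liftQ _ _ _
  obtain ⟨G, hG⟩ := Submodule.exists_isCompl f.range
  have : FiniteDimensional 𝕜 G := (Submodule.quotientEquivOfIsCompl _ G hG).finiteDimensional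
  rw [← hg] at hG ⊢
  exact g.closed_complemented_range_of_isCompl_of_ker_eq_bot G hG G.closed_of_finiteDimensional
    (Submodule.ker_liftQ_eq_bot _ _ _ le_rfl)

theorem isClosed_inf_range_of_finiteDimensional_quotient (f : E →L[𝕜] F) {N : Submodule 𝕜 F}
    (hN : IsClosed (N : Set F)) [FiniteDimensional 𝕜 (N ⧸ f.range.comap N.subtype)] :
    IsClosed ((N ⊓ f.range : Submodule 𝕜 F) : Set F) := by
  set M := N.comap (f : E →ₗ[𝕜] F)
  have : CompleteSpace M := (hN.preimage f.continuous).completeSpace_coe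
  have : CompleteSpace N := hN.completeSpace_coe
  set f₀ : M →L[𝕜] N := (f.comp M.subtypeL).codRestrict N fun x ↦ x.2
  have hrange : f₀.range = f.range.comap N.subtype := by
    ext y
    constructor
    · rintro ⟨x, rfl⟩
      exact ⟨x, rfl⟩
    · rintro ⟨x, hx⟩
      exact ⟨⟨x, show f x ∈ N from hx ▸ y.2⟩, Subtype.ext hx⟩
  have : FiniteDimensional 𝕜 (N ⧸ f₀.range) := hrange ▸ inferInstance
  rw [← Submodule.map_comap_subtype, ← hrange]
  exact hN.isClosedEmbedding_subtypeVal.isClosedMap _ f₀.isClosed_range_of_finiteDimensional_quotient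

theorem isClosed_range_of_finiteDimensional_quotients (f : E →L[𝕜] F) {N : Submodule 𝕜 F}
    (hN : IsClosed (N : Set F)) [FiniteDimensional 𝕜 (N ⧸ f.range.comap N.subtype)]
    [FiniteDimensional 𝕜 (f.range ⧸ N.comap f.range.subtype)] :
    IsClosed (f.range : Set F) := by
  have hinf := f.isClosed_inf_range_of_finiteDimensional_quotient hN
  have hcomap : (N ⊓ f.range).comap f.range.subtype = N.comap f.range.subtype := by
    rw [Submodule.comap_inf, Submodule.comap_subtype_self, inf_top_eq]
  have : FiniteDimensional 𝕜 (f.range ⧸ (N ⊓ f.range).comap f.range.subtype) := by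
    rwa [hcomap]
  simpa using Submodule.isClosed_sup_of_finiteDimensional_quotient_comap hinf (A := f.range)

end ContinuousLinearMap

/-- For a Fredholm pair `(S,T)`, the ranges `R(S)`, `R(T)` and the sums `N(T) + R(S)`,
`N(S) + R(T)` are closed subspaces. -/
theorem fredholmPair_ranges_closed {X Y : Type*} [NormedAddCommGroup X] [NormedSpace ℂ X]
    [CompleteSpace X] [NormedAddCommGroup Y] [NormedSpace ℂ Y] [CompleteSpace Y]
    (S : X →L[ℂ] Y) (T : Y →L[ℂ] X) (h : IsFredholmPair S T) :
    IsClosed ((LinearMap.range (S : X →ₗ[ℂ] Y) : Submodule ℂ Y) : Set Y) ∧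
    IsClosed (((LinearMap.ker (T : Y →ₗ[ℂ] X) ⊔ LinearMap.range (S : X →ₗ[ℂ] Y) : Submodule ℂ Y) : Submodule ℂ Y) : Set Y) ∧
    IsClosed ((LinearMap.range (T : Y →ₗ[ℂ] X) : Submodule ℂ X) : Set X) ∧
    IsClosed (((LinearMap.ker (S : X →ₗ[ℂ] Y) ⊔ LinearMap.range (T : Y →ₗ[ℂ] X) : Submodule ℂ X) : Submodule ℂ X) : Set X) := by
  obtain ⟨_, _, _, _⟩ := h
  exact ⟨S.isClosed_range_of_finiteDimensional_quotients T.isClosed_ker,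
    Submodule.isClosed_sup_of_finiteDimensional_quotient_comap T.isClosed_ker,
    T.isClosed_range_of_finiteDimensional_quotients S.isClosed_ker,
    Submodule.isClosed_sup_of_finiteDimensional_quotient_comap S.isClosed_ker⟩
end

section
/- Let X and Y be Banach spaces over ℂ, S : X → Y and T : Y → X bounded linear operators such that (S,T) is a Fredholm pair. Then the following four assertions are equivalent: (i) R(T) is a complemented subspace of X (i.e., admits a closed complement); (ii) N(S) is a complemented subspace of X; (iii) N(S) + R(T) is a complemented subspace of X; (iv) N(S) ∩ R(T) is a complemented subspace of X. -/
/-!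
Having a closed complement is inherited in both directions between subspaces `M ≤ M'` with
`M' / M` finite dimensional: going up, cut the finite-dimensional piece `M' ∩ W` out of a closed
complement `W` of `M`; going down, add to a closed complement of `M'` a finite-dimensional
complement of `M` in `M'`, which keeps it closed. For a Fredholm pair, `N(S) ∩ R(T)` has finite
codimension in both `N(S)` and `R(T)`, and `N(S)` has finite codimension in `N(S) + R(T)`
because `(N(S) + R(T)) / N(S) ≅ R(T) / (N(S) ∩ R(T))`.
-/

open Module

/-- A subspace `M` of a Banach space is complemented if there exists a closed
subspace `W` with `Z = M ⊕ W`. -/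
def HasClosedComplement {Z : Type*} [NormedAddCommGroup Z] [NormedSpace ℂ Z]
    (M : Submodule ℂ Z) : Prop :=
  ∃ W : Submodule ℂ Z, IsClosed (W : Set Z) ∧ IsCompl M W

namespace Submodule

section Comap

variable {R M : Type*} [Semiring R] [AddCommMonoid M] [Module R M] (A B : Submodule R M)

theorem comap_subtype_inf_left : (A ⊓ B).comap A.subtype = B.comap A.subtype := by
  rw [comap_inf, comap_subtype_self, top_inf_eq]

theorem comap_subtype_inf_right : (B ⊓ A).comap A.subtype = B.comap A.subtype := by
  rw [inf_comm, comap_subtype_inf_left]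

end Comap

variable {K V : Type*} [DivisionRing K] [AddCommGroup V] [Module K V]

theorem finiteDimensional_of_le_of_disjoint {M M' G : Submodule K V} (hGM' : G ≤ M')
    (hMG : Disjoint M G) [FiniteDimensional K (M' ⧸ M.comap M'.subtype)] :
    FiniteDimensional K G := by
  refine .of_injective ((M.comap M'.subtype).mkQ ∘ₗ inclusion hGM') ?_
  rw [← LinearMap.ker_eq_bot, LinearMap.ker_eq_bot']
  intro x hx
  have hxM : (x : V) ∈ M := by simpa using hx
  exact Subtype.ext (hMG.le_bot ⟨hxM, x.2⟩)

theorem finiteDimensional_sup_quotient_left (A B : Submodule K V)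
    [FiniteDimensional K (B ⧸ A.comap B.subtype)] :
    FiniteDimensional K (↥(A ⊔ B) ⧸ A.comap (A ⊔ B).subtype) := by
  have : FiniteDimensional K (B ⧸ B.comap B.subtype ⊓ A.comap B.subtype) := by
    rwa [comap_subtype_self, top_inf_eq]
  rw [sup_comm]
  exact (LinearMap.quotientInfEquivSupQuotient B A).finiteDimensional

end Submodule

section HasClosedComplement

variable {Z : Type*} [NormedAddCommGroup Z] [NormedSpace ℂ Z] {M M' : Submodule ℂ Z}

theorem HasClosedComplement.of_le (hM : HasClosedComplement M) (hle : M ≤ M')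
    [FiniteDimensional ℂ (relQuot M' M)] : HasClosedComplement M' := by
  obtain ⟨W, hW, hMW⟩ := hM
  have : FiniteDimensional ℂ ↥(M' ⊓ W) :=
    Submodule.finiteDimensional_of_le_of_disjoint inf_le_left
      (hMW.disjoint.mono_right inf_le_right)
  obtain ⟨V, hV, hFV⟩ :=
    (Submodule.ClosedComplemented.of_finiteDimensional (M' ⊓ W)).exists_isClosed_isCompl
  exact ⟨W ⊓ V, hW.inter hV,
    (hMW.codisjoint.mono_left hle).isCompl_inf_right_of_isCompl_inf_left hFV⟩

theorem HasClosedComplement.of_ge (hM' : HasClosedComplement M') (hle : M ≤ M')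
    [FiniteDimensional ℂ (relQuot M' M)] : HasClosedComplement M := by
  obtain ⟨W, hW, hM'W⟩ := hM'
  obtain ⟨G, hMG, hMGM'⟩ := IsModularLattice.exists_disjoint_and_sup_eq hle
  have : FiniteDimensional ℂ G :=
    Submodule.finiteDimensional_of_le_of_disjoint (hMGM' ▸ le_sup_right) hMG
  refine ⟨G ⊔ W, ?_, hMG.isCompl_sup_right_of_isCompl_sup_left (hMGM' ▸ hM'W)⟩
  rw [sup_comm]
  exact W.isClosed_sup_finiteDimensional G hW

theorem hasClosedComplement_iff_of_le (hle : M ≤ M') [FiniteDimensional ℂ (relQuot M' M)] :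
    HasClosedComplement M ↔ HasClosedComplement M' :=
  ⟨fun h ↦ h.of_le hle, fun h ↦ h.of_ge hle⟩

end HasClosedComplement

theorem fredholmPair_complemented_tfae_general {X Y : Type*} [NormedAddCommGroup X] [NormedSpace ℂ X]
    [NormedAddCommGroup Y] [NormedSpace ℂ Y]
    (S : X →L[ℂ] Y) (T : Y →L[ℂ] X) (h : IsFredholmPair S T) :
    List.TFAE [HasClosedComplement (LinearMap.range (T : Y →ₗ[ℂ] X)),
      HasClosedComplement (LinearMap.ker (S : X →ₗ[ℂ] Y)),
      HasClosedComplement (LinearMap.ker (S : X →ₗ[ℂ] Y) ⊔ LinearMap.range (T : Y →ₗ[ℂ] X)),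
      HasClosedComplement (LinearMap.ker (S : X →ₗ[ℂ] Y) ⊓ LinearMap.range (T : Y →ₗ[ℂ] X))] := by
  set N := LinearMap.ker (S : X →ₗ[ℂ] Y)
  set R := LinearMap.range (T : Y →ₗ[ℂ] X)
  obtain ⟨hN, hR, -⟩ := h
  have hNR : FiniteDimensional ℂ (relQuot N (N ⊓ R)) :=
    (Submodule.quotEquivOfEq _ _ (Submodule.comap_subtype_inf_left N R)).symm.finiteDimensional
  have hRN : FiniteDimensional ℂ (relQuot R (N ⊓ R)) :=
    (Submodule.quotEquivOfEq _ _ (Submodule.comap_subtype_inf_right R N)).symm.finiteDimensional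
  have hSup : FiniteDimensional ℂ (relQuot (N ⊔ R) N) :=
    Submodule.finiteDimensional_sup_quotient_left N R
  tfae_have 4 ↔ 1 := hasClosedComplement_iff_of_le inf_le_right
  tfae_have 4 ↔ 2 := hasClosedComplement_iff_of_le inf_le_left
  tfae_have 2 ↔ 3 := hasClosedComplement_iff_of_le le_sup_left
  tfae_finish

/-- For a Fredholm pair `(S,T)` the following are equivalent: `R(T)` is complemented,
`N(S)` is complemented, `N(S) + R(T)` is complemented, `N(S) ∩ R(T)` is complemented. -/
theorem fredholmPair_complemented_tfae {X Y : Type*} [NormedAddCommGroup X] [NormedSpace ℂ X]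
    [CompleteSpace X] [NormedAddCommGroup Y] [NormedSpace ℂ Y] [CompleteSpace Y]
    (S : X →L[ℂ] Y) (T : Y →L[ℂ] X) (h : IsFredholmPair S T) :
    List.TFAE [HasClosedComplement (LinearMap.range (T : Y →ₗ[ℂ] X)),
      HasClosedComplement (LinearMap.ker (S : X →ₗ[ℂ] Y)),
      HasClosedComplement (LinearMap.ker (S : X →ₗ[ℂ] Y) ⊔ LinearMap.range (T : Y →ₗ[ℂ] X)),
      HasClosedComplement (LinearMap.ker (S : X →ₗ[ℂ] Y) ⊓ LinearMap.range (T : Y →ₗ[ℂ] X))] :=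
  fredholmPair_complemented_tfae_general S T h
end

section
/- Let X and Y be Hilbert spaces over ℂ, S : X → Y and T : Y → X bounded linear operators such that (S,T) is a Fredholm pair. Then (S,T) is a regular Fredholm pair, i.e., both S and T are regular operators. -/
open Module

/-- A bounded operator `S` is regular if it has a generalized inverse `S'`
with `S = S ∘ S' ∘ S`. -/
def IsRegularOp {X Y : Type*} [SeminormedAddCommGroup X] [NormedSpace ℂ X]
    [SeminormedAddCommGroup Y] [NormedSpace ℂ Y] (S : X →L[ℂ] Y) : Prop :=
  ∃ S' : Y →L[ℂ] X, S.comp (S'.comp S) = S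

/-!
The range of `S` meets `N(T)` in the range of the restriction `S⁻¹(N(T)) → N(T)`, a bounded map
between Banach spaces whose range has finite codimension `c`; such a range is closed (open mapping
theorem for the induced injective map on the quotient by the kernel, summed with a
finite-dimensional complement of the range). Since `R(S)` exceeds this closed subspace by the
finite dimension `d`, `R(S)` is closed, and symmetrically so is `R(T)`. In a Hilbert space the
closed subspaces `N(S)` and `R(S)` have orthogonal complements, and an operator whose kernel and
range are complemented is regular: a generalized inverse is the inverse of `S` on a complement of
`N(S)`, composed with a projection onto `R(S)`.
-/

section Banach

variable {𝕜 E F : Type*} [NontriviallyNormedField 𝕜] [CompleteSpace 𝕜]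
  [NormedAddCommGroup E] [NormedSpace 𝕜 E] [NormedAddCommGroup F] [NormedSpace 𝕜 F]

theorem Submodule.isClosed_of_isClosed_inf_of_finiteDimensional_quotient {p q : Submodule 𝕜 F}
    [FiniteDimensional 𝕜 (p ⧸ q.comap p.subtype)] (h : IsClosed ((p ⊓ q : Submodule 𝕜 F) : Set F)) :
    IsClosed (p : Set F) := by
  rw [← p.map_comap_subtype q] at h
  simpa using p.subtype.isClosed_range_of_isClosed_map_of_finiteDimensional_quotient h

variable [CompleteSpace E] [CompleteSpace F]

theorem ContinuousLinearMap.isClosed_range_of_finiteDimensional_quotient_s5 (u : E →L[𝕜] F)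
    [FiniteDimensional 𝕜 (F ⧸ u.range)] : IsClosed (u.range : Set F) := by
  have : IsClosed (u.ker : Set E) := u.isClosed_ker
  let v := u.ker.liftQL u le_rfl
  have hker : v.ker = ⊥ := u.ker.ker_liftQ_eq_bot _ _ le_rfl
  have hrange : v.range = u.range := u.ker.range_liftQ _ _
  obtain ⟨G, hG⟩ := Submodule.exists_isCompl u.range
  have : FiniteDimensional 𝕜 G := (Submodule.quotientEquivOfIsCompl _ G hG).finiteDimensional
  rw [← hrange] at hG ⊢
  exact v.closed_complemented_range_of_isCompl_of_ker_eq_bot G hG G.closed_of_finiteDimensional hker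

theorem ContinuousLinearMap.isClosed_range_inf_of_finiteDimensional_quotient (u : E →L[𝕜] F)
    {K : Submodule 𝕜 F} (hK : IsClosed (K : Set F))
    [FiniteDimensional 𝕜 (K ⧸ u.range.comap K.subtype)] :
    IsClosed ((u.range ⊓ K : Submodule 𝕜 F) : Set F) := by
  have : CompleteSpace K := hK.completeSpace_coe
  have : CompleteSpace (K.comap u.toLinearMap) := (hK.preimage u.continuous).completeSpace_coe
  let u₀ : K.comap u.toLinearMap →L[𝕜] K := u.restrict fun _ hx ↦ hx
  have hrange : u₀.range = u.range.comap K.subtype := by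
    simp [u₀, Submodule.map_comap_eq, Submodule.comap_inf]
  have : FiniteDimensional 𝕜 (K ⧸ u₀.range) := by rwa [hrange]
  have h₀ := u₀.isClosed_range_of_finiteDimensional_quotient_s5
  rw [hrange] at h₀
  rw [inf_comm, ← K.map_comap_subtype, Submodule.map_coe]
  exact hK.isClosedEmbedding_subtypeVal.isClosedMap _ h₀

theorem ContinuousLinearMap.isClosed_range_of_finiteDimensional_quotients_s5 (u : E →L[𝕜] F)
    {K : Submodule 𝕜 F} (hK : IsClosed (K : Set F))
    [FiniteDimensional 𝕜 (K ⧸ u.range.comap K.subtype)]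
    [FiniteDimensional 𝕜 (u.range ⧸ K.comap u.range.subtype)] :
    IsClosed (u.range : Set F) :=
  Submodule.isClosed_of_isClosed_inf_of_finiteDimensional_quotient
    (u.isClosed_range_inf_of_finiteDimensional_quotient hK)

end Banach

section Regular

variable {E F : Type*} [NormedAddCommGroup E] [NormedSpace ℂ E] [CompleteSpace E]
  [NormedAddCommGroup F] [NormedSpace ℂ F] [CompleteSpace F]

theorem isRegularOp_of_closedComplemented (u : E →L[ℂ] F) (hker : u.ker.ClosedComplemented)
    (hrange : u.range.ClosedComplemented) : IsRegularOp u := by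
  obtain ⟨C, hC, hcompl⟩ := hker.exists_isClosed_isCompl
  have : CompleteSpace C := hC.completeSpace_coe
  let v := u.comp C.subtypeL
  have hv_ker : v.ker = ⊥ := by
    simpa [v, LinearMap.ker_comp, ← Submodule.disjoint_iff_comap_eq_bot] using hcompl.disjoint.symm
  have hv_range : v.range = u.range := by
    simpa [v, LinearMap.range_comp, Submodule.map_eq_range_iff] using hcompl.codisjoint.symm
  obtain ⟨g, hg⟩ :=
    ContinuousLinearMap.HasLeftInverse.of_injective_of_isClosed_range_of_closedComplement_range
      (LinearMap.ker_eq_bot.1 hv_ker)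
      (by rw [← ContinuousLinearMap.coe_coe, ← LinearMap.coe_range, hv_range]; exact hrange.isClosed)
      (hv_range ▸ hrange)
  refine ⟨C.subtypeL.comp g, ContinuousLinearMap.ext fun x ↦ ?_⟩
  obtain ⟨c, hc⟩ : u x ∈ v.range := hv_range ▸ LinearMap.mem_range_self _ x
  simp only [ContinuousLinearMap.comp_apply]
  rw [← hc]
  exact congrArg (fun y : C ↦ u y) (hg c)

end Regular

theorem Submodule.closedComplemented_of_isClosed {𝕜 E : Type*} [RCLike 𝕜] [NormedAddCommGroup E]
    [InnerProductSpace 𝕜 E] [CompleteSpace E] {K : Submodule 𝕜 E} (hK : IsClosed (K : Set E)) :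
    K.ClosedComplemented :=
  have : CompleteSpace K := hK.completeSpace_coe
  ⟨K.orthogonalProjectionOnto, fun x ↦ K.orthogonalProjectionOnto_mem_subspace_eq_self x⟩

theorem isRegularOp_of_isClosed_range {E F : Type*} [NormedAddCommGroup E] [InnerProductSpace ℂ E]
    [CompleteSpace E] [NormedAddCommGroup F] [InnerProductSpace ℂ F] [CompleteSpace F]
    (u : E →L[ℂ] F) (hu : IsClosed (u.range : Set F)) : IsRegularOp u :=
  isRegularOp_of_closedComplemented u (Submodule.closedComplemented_of_isClosed u.isClosed_ker)
    (Submodule.closedComplemented_of_isClosed hu)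

namespace IsFredholmPair

variable {X Y : Type*} [NormedAddCommGroup X] [NormedSpace ℂ X] [NormedAddCommGroup Y]
  [NormedSpace ℂ Y] {S : X →L[ℂ] Y} {T : Y →L[ℂ] X}

theorem symm (h : IsFredholmPair S T) : IsFredholmPair T S :=
  ⟨h.2.2.1, h.2.2.2, h.1, h.2.1⟩

theorem isClosed_range_left [CompleteSpace X] [CompleteSpace Y] (h : IsFredholmPair S T) :
    IsClosed (S.range : Set Y) :=
  have := h.2.2.1
  have := h.2.2.2
  S.isClosed_range_of_finiteDimensional_quotients_s5 T.isClosed_ker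

end IsFredholmPair

/-- A Fredholm pair of operators between Hilbert spaces is a regular Fredholm pair. -/
theorem fredholmPair_hilbert_regular {X Y : Type*} [NormedAddCommGroup X]
    [InnerProductSpace ℂ X] [CompleteSpace X] [NormedAddCommGroup Y]
    [InnerProductSpace ℂ Y] [CompleteSpace Y]
    (S : X →L[ℂ] Y) (T : Y →L[ℂ] X) (h : IsFredholmPair S T) :
    IsRegularOp S ∧ IsRegularOp T :=
  ⟨isRegularOp_of_isClosed_range S h.isClosed_range_left,
    isRegularOp_of_isClosed_range T h.symm.isClosed_range_left⟩
end

section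
/- Let X and Y be Banach spaces over ℂ and let (S,T) be a regular Fredholm pair, S : X → Y, T : Y → X. Then there exist bounded linear operators S' : Y → X and T' : X → Y such that: (i) S' and T' are normalized generalized inverses of S and T respectively, i.e., S = S S' S, S' = S' S S', T = T T' T, and T' = T' T T'; (ii) (S',T') is a regular Fredholm pair (of operators Y → X and X → Y); and (iii) ind(S',T') = − ind(S,T). -/
open Module

/-- The index of a Fredholm pair: `ind (S,T) = a - b - c + d`. -/
noncomputable def fpIndex {X Y : Type*} [SeminormedAddCommGroup X] [NormedSpace ℂ X]
    [SeminormedAddCommGroup Y] [NormedSpace ℂ Y] (S : X →L[ℂ] Y) (T : Y →L[ℂ] X) : ℤ :=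
  (relDim (LinearMap.ker (S : X →ₗ[ℂ] Y)) (LinearMap.range (T : Y →ₗ[ℂ] X)) : ℤ)
    - (relDim (LinearMap.range (T : Y →ₗ[ℂ] X)) (LinearMap.ker (S : X →ₗ[ℂ] Y)) : ℤ)
    - (relDim (LinearMap.ker (T : Y →ₗ[ℂ] X)) (LinearMap.range (S : X →ₗ[ℂ] Y)) : ℤ)
    + (relDim (LinearMap.range (S : X →ₗ[ℂ] Y)) (LinearMap.ker (T : Y →ₗ[ℂ] X)) : ℤ)


/-!
If `S₀` is a generalized inverse of `S`, `P` projects onto a closed complement `M` of `N(S)`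
along `N(S)` and `Q` projects onto `R(S)` along a closed complement `K`, then `P S₀ Q` is a
normalized generalized inverse of `S` with kernel `K` and range `M`. So it suffices to choose,
for `A = N(S)`, `B = R(T)` in `X` (and `A = N(T)`, `B = R(S)` in `Y`), closed complements `M`
of `A` and `K` of `B` with `[K : M] = [A : B]`, where `[U : V] = dim U/(U ∩ V) - dim V/(U ∩ V)`.

Take any closed complement `K` of `B` and any complement `A₀` of `A`. Then `C = (A + B) ∩ K` and
`D = (A + B) ∩ A₀` are complements of `B` and `A` in `A + B`, of dimensions `dim A/(A ∩ B)` and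
`dim B/(A ∩ B)`. Splitting `K = C ⊕ K₂` with `K₂` closed, `A + B` and `K₂` are complementary,
so `M = D ⊕ K₂` is a complement of `A`; it is closed as `D` is finite-dimensional, hence a
topological complement by completeness. Finally `[K : M] = [C : D] = dim C - dim D = [A : B]`.
-/

open Submodule

theorem Submodule.comap_subtype_eq_comap_subtype_inf {R M : Type*} [Ring R] [AddCommGroup M]
    [Module R M] (A B : Submodule R M) : B.comap A.subtype = (A ⊓ B).comap A.subtype := by
  rw [comap_inf, comap_subtype_self, top_inf_eq]

theorem IsCompl.sup_inf_eq_of_le {α : Type*} [Lattice α] [BoundedOrder α] [IsModularLattice α]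
    {x y z : α} (h : IsCompl x y) (hxz : x ≤ z) : x ⊔ z ⊓ y = z := by
  rw [inf_comm, ← sup_inf_assoc_of_le y hxz, h.sup_eq_top, top_inf_eq]

section RelQuot

variable {Z : Type*} [AddCommGroup Z] [Module ℂ Z]

noncomputable def relQuotEquivOfInfEq {A B B' : Submodule ℂ Z} (h : A ⊓ B = A ⊓ B') :
    relQuot A B ≃ₗ[ℂ] relQuot A B' :=
  quotEquivOfEq _ _ <| by
    rw [comap_subtype_eq_comap_subtype_inf, h, ← comap_subtype_eq_comap_subtype_inf]

noncomputable def relQuotEquivSup (A B : Submodule ℂ Z) : relQuot A B ≃ₗ[ℂ] relQuot (A ⊔ B) B :=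
  (relQuotEquivOfInfEq (B' := A ⊓ B) (by rw [← inf_assoc, inf_idem])).trans
    (LinearMap.quotientInfEquivSupQuotient A B)

noncomputable def relQuotEquivOfSupEq {A A' B : Submodule ℂ Z} (h : A ⊔ B = A' ⊔ B) :
    relQuot A B ≃ₗ[ℂ] relQuot A' B :=
  (relQuotEquivSup A B).trans (h ▸ (relQuotEquivSup A' B).symm)

noncomputable def relQuotEquivOfSupEqOfDisjoint {A B C : Submodule ℂ Z} (h : A ⊔ B = C ⊔ B)
    (hC : Disjoint C B) : relQuot A B ≃ₗ[ℂ] C :=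
  (relQuotEquivOfSupEq h).trans <|
    (relQuotEquivOfInfEq (B' := ⊥) (by rw [hC.eq_bot, inf_bot_eq])).trans <|
      quotEquivOfEqBot _ (by rw [comap_bot, ker_subtype])

noncomputable def relQuotSupSupEquiv {C D W : Submodule ℂ Z} (h : Disjoint (C ⊔ D) W) :
    relQuot (C ⊔ W) (D ⊔ W) ≃ₗ[ℂ] relQuot C D :=
  (relQuotEquivOfSupEq (A' := C) (by rw [sup_sup_sup_comm, sup_idem, sup_assoc])).trans <|
    relQuotEquivOfInfEq (B' := D) <|
      calc C ⊓ (D ⊔ W) = C ⊓ ((D ⊔ W) ⊓ (C ⊔ D)) := by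
            rw [inf_comm (D ⊔ W), ← inf_assoc, inf_sup_self]
        _ = C ⊓ D := by
            rw [sup_inf_assoc_of_le W (le_sup_right : D ≤ C ⊔ D), inf_comm W, h.eq_bot,
              sup_bot_eq]

theorem relDim_add_finrank_eq {A B : Submodule ℂ Z} [FiniteDimensional ℂ A]
    [FiniteDimensional ℂ B] : relDim A B + finrank ℂ B = finrank ℂ ↥(A ⊔ B) := by
  rw [relDim, (relQuotEquivSup A B).finrank_eq, ← (comapSubtypeEquivOfLe le_sup_right).finrank_eq]
  exact finrank_quotient_add_finrank _

def IsCommensurable (A B : Submodule ℂ Z) : Prop :=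
  FiniteDimensional ℂ (relQuot A B) ∧ FiniteDimensional ℂ (relQuot B A)

noncomputable def relIndex (A B : Submodule ℂ Z) : ℤ :=
  relDim A B - relDim B A

theorem relIndex_eq_finrank_sub_finrank (C D : Submodule ℂ Z) [FiniteDimensional ℂ C]
    [FiniteDimensional ℂ D] : relIndex C D = finrank ℂ C - finrank ℂ D := by
  have hCD := relDim_add_finrank_eq (A := C) (B := D)
  have hDC := relDim_add_finrank_eq (A := D) (B := C)
  rw [sup_comm] at hDC
  rw [relIndex]
  omega

theorem isCommensurable_sup_sup_iff {C D W : Submodule ℂ Z} (h : Disjoint (C ⊔ D) W) :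
    IsCommensurable (C ⊔ W) (D ⊔ W) ↔ IsCommensurable C D :=
  and_congr (Module.Finite.equiv_iff (relQuotSupSupEquiv h))
    (Module.Finite.equiv_iff (relQuotSupSupEquiv (sup_comm C D ▸ h)))

theorem relIndex_sup_sup {C D W : Submodule ℂ Z} (h : Disjoint (C ⊔ D) W) :
    relIndex (C ⊔ W) (D ⊔ W) = relIndex C D := by
  rw [relIndex, relIndex, relDim, relDim, relDim, relDim, (relQuotSupSupEquiv h).finrank_eq,
    (relQuotSupSupEquiv (sup_comm C D ▸ h)).finrank_eq]

end RelQuot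

theorem exists_isTopCompl_relIndex_eq {Z : Type*} [NormedAddCommGroup Z] [NormedSpace ℂ Z]
    [CompleteSpace Z] {A B : Submodule ℂ Z} (hA : IsClosed (A : Set Z))
    (hB : B.ClosedComplemented) (hAB : IsCommensurable A B) :
    ∃ (M K : Submodule ℂ Z), A.IsTopCompl M ∧ B.IsTopCompl K ∧
      IsCommensurable K M ∧ relIndex K M = relIndex A B := by
  obtain ⟨_, _⟩ := hAB
  obtain ⟨K, hBK⟩ := hB.exists_isTopCompl
  obtain ⟨A₀, hAA₀⟩ := A.exists_isCompl
  set C := (A ⊔ B) ⊓ K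
  set D := (A ⊔ B) ⊓ A₀
  have hBC : B ⊔ C = A ⊔ B := hBK.isCompl.sup_inf_eq_of_le le_sup_right
  have hAD : A ⊔ D = A ⊔ B := hAA₀.sup_inf_eq_of_le le_sup_left
  have eC : relQuot A B ≃ₗ[ℂ] C :=
    relQuotEquivOfSupEqOfDisjoint (by rw [sup_comm C, hBC])
      (hBK.isCompl.disjoint.mono_right inf_le_right).symm
  have eD : relQuot B A ≃ₗ[ℂ] D :=
    relQuotEquivOfSupEqOfDisjoint (by rw [sup_comm D, hAD, sup_comm])
      (hAA₀.disjoint.mono_right inf_le_right).symm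
  have : FiniteDimensional ℂ C := eC.finiteDimensional
  have : FiniteDimensional ℂ D := eD.finiteDimensional
  obtain ⟨W, hCW⟩ := (ClosedComplemented.of_finiteDimensional C).exists_isTopCompl
  set K₂ := K ⊓ W
  have hCK₂ : C ⊔ K₂ = K := hCW.isCompl.sup_inf_eq_of_le inf_le_right
  have hABK₂ : IsCompl (A ⊔ B) K₂ := by
    constructor
    · rw [disjoint_iff, ← inf_assoc]
      exact hCW.isCompl.inf_eq_bot
    · rw [codisjoint_iff, ← hBC, sup_assoc, hCK₂]
      exact hBK.isCompl.sup_eq_top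
  have hK₂closed : IsClosed (K₂ : Set Z) := hBK.isClosed'.inter hCW.isClosed'
  have hAM : IsCompl A (D ⊔ K₂) :=
    Disjoint.isCompl_sup_right_of_isCompl_sup_left (hAA₀.disjoint.mono_right inf_le_right)
      (hAD ▸ hABK₂)
  have hMclosed : IsClosed ((D ⊔ K₂ : Submodule ℂ Z) : Set Z) := by
    rw [sup_comm]
    exact K₂.isClosed_sup_finiteDimensional D hK₂closed
  have hCDK₂ : Disjoint (C ⊔ D) K₂ :=
    hABK₂.disjoint.mono_left (sup_le inf_le_left inf_le_left)
  refine ⟨D ⊔ K₂, K, hAM.isTopCompl_of_isClosed hA hMclosed, hBK, ?_, ?_⟩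
  · rw [← hCK₂, isCommensurable_sup_sup_iff hCDK₂]
    exact ⟨inferInstance, inferInstance⟩
  · rw [← hCK₂, relIndex_sup_sup hCDK₂, relIndex_eq_finrank_sub_finrank, relIndex, relDim,
      relDim, eC.finrank_eq, eD.finrank_eq]

section Operators

variable {X Y : Type*} [SeminormedAddCommGroup X] [NormedSpace ℂ X]
  [SeminormedAddCommGroup Y] [NormedSpace ℂ Y]

theorem isFredholmPair_iff (S : X →L[ℂ] Y) (T : Y →L[ℂ] X) :
    IsFredholmPair S T ↔
      IsCommensurable (LinearMap.ker (S : X →ₗ[ℂ] Y)) (LinearMap.range (T : Y →ₗ[ℂ] X)) ∧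
      IsCommensurable (LinearMap.ker (T : Y →ₗ[ℂ] X)) (LinearMap.range (S : X →ₗ[ℂ] Y)) :=
  and_assoc.symm

theorem fpIndex_eq_relIndex_sub_relIndex (S : X →L[ℂ] Y) (T : Y →L[ℂ] X) :
    fpIndex S T =
      relIndex (LinearMap.ker (S : X →ₗ[ℂ] Y)) (LinearMap.range (T : Y →ₗ[ℂ] X)) -
      relIndex (LinearMap.ker (T : Y →ₗ[ℂ] X)) (LinearMap.range (S : X →ₗ[ℂ] Y)) := by
  rw [fpIndex, relIndex, relIndex]
  ring

theorem IsRegularOp.closedComplemented_range {S : X →L[ℂ] Y} (hS : IsRegularOp S) :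
    (LinearMap.range (S : X →ₗ[ℂ] Y)).ClosedComplemented := by
  obtain ⟨S₀, hS₀⟩ := hS
  have hidem : IsIdempotentElem (S.comp S₀) :=
    ContinuousLinearMap.ext fun y => congr($hS₀ (S₀ y))
  have hrange : LinearMap.range ((S.comp S₀ : Y →L[ℂ] Y) : Y →ₗ[ℂ] Y) =
      LinearMap.range (S : X →ₗ[ℂ] Y) := by
    refine le_antisymm (LinearMap.range_comp_le_range _ _) ?_
    rintro _ ⟨x, rfl⟩
    exact ⟨S x, congr($hS₀ x)⟩
  exact hrange ▸ (ContinuousLinearMap.IsIdempotentElem.isTopCompl hidem).closedComplemented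

theorem IsRegularOp.exists_normalized_inverse {S : X →L[ℂ] Y} (hS : IsRegularOp S)
    {M : Submodule ℂ X} {K : Submodule ℂ Y}
    (hM : (LinearMap.ker (S : X →ₗ[ℂ] Y)).IsTopCompl M)
    (hK : (LinearMap.range (S : X →ₗ[ℂ] Y)).IsTopCompl K) :
    ∃ S' : Y →L[ℂ] X, S.comp (S'.comp S) = S ∧ S'.comp (S.comp S') = S' ∧
      LinearMap.ker (S' : Y →ₗ[ℂ] X) = K ∧ LinearMap.range (S' : Y →ₗ[ℂ] X) = M := by
  obtain ⟨S₀, hS₀⟩ := hS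
  set P := M.projectionL _ hM.symm
  set Q := (LinearMap.range (S : X →ₗ[ℂ] Y)).projectionL K hK
  have hSP (x : X) : S (P x) = S x := by
    have hker : S ((LinearMap.ker (S : X →ₗ[ℂ] Y)).projectionL M hM x) = 0 :=
      projectionL_apply_mem hM x
    rw [← congrArg S (projectionL_add_projectionL_eq_self hM x), map_add, hker,
      zero_add]
  have hPS₀S (x : X) : P (S₀ (S x)) = P x := by
    rw [← sub_eq_zero, ← map_sub, projectionL_apply_eq_zero_iff, LinearMap.mem_ker]
    simpa [sub_eq_zero] using congr($hS₀ x)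
  have hQS (x : X) : Q (S x) = S x := (projectionL_eq_self_iff hK _).mpr ⟨x, rfl⟩
  have hSS₀Q (y : Y) : S (S₀ (Q y)) = Q y := by
    obtain ⟨x, hx⟩ := projectionL_apply_mem hK y
    rw [← hx]
    exact congr($hS₀ x)
  have hQQ (y : Y) : Q (Q y) = Q y :=
    (projectionL_eq_self_iff hK _).mpr (projectionL_apply_mem hK y)
  set S' := P.comp (S₀.comp Q)
  have hSS' (y : Y) : S (S' y) = Q y := by
    simp only [S', ContinuousLinearMap.comp_apply, hSP, hSS₀Q]
  refine ⟨S', ?_, ?_, ?_, ?_⟩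
  · ext x
    simp only [ContinuousLinearMap.comp_apply, hSS', hQS]
  · ext y
    change S' (S (S' y)) = S' y
    rw [hSS']
    change P (S₀ (Q (Q y))) = P (S₀ (Q y))
    rw [hQQ]
  · ext y
    simp only [LinearMap.mem_ker, ContinuousLinearMap.coe_coe]
    refine ⟨fun hy => ?_, fun hy => ?_⟩
    · rw [← projectionL_apply_eq_zero_iff hK, ← hSS', hy, map_zero]
    · have hQy : Q y = 0 := (projectionL_apply_eq_zero_iff hK).mpr hy
      simp only [S', ContinuousLinearMap.comp_apply, hQy, map_zero]
  · ext x
    refine ⟨fun ⟨y, hy⟩ => hy ▸ projectionL_apply_mem hM.symm _, fun hx => ⟨S x, ?_⟩⟩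
    have hPx : P x = x := (projectionL_eq_self_iff hM.symm x).mpr hx
    simp only [ContinuousLinearMap.coe_coe, S', ContinuousLinearMap.comp_apply, hQS, hPS₀S, hPx]

end Operators

/-- For a regular Fredholm pair `(S,T)` there exist normalized generalized inverses
`S'`, `T'` of `S`, `T` such that `(S',T')` is a regular Fredholm pair with
`ind (S',T') = - ind (S,T)`. -/
theorem regularFredholmPair_exists_normalized_inverse_pair {X Y : Type*}
    [NormedAddCommGroup X] [NormedSpace ℂ X] [CompleteSpace X]
    [NormedAddCommGroup Y] [NormedSpace ℂ Y] [CompleteSpace Y]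
    (S : X →L[ℂ] Y) (T : Y →L[ℂ] X) (h : IsFredholmPair S T)
    (hS : IsRegularOp S) (hT : IsRegularOp T) :
    ∃ (S' : Y →L[ℂ] X) (T' : X →L[ℂ] Y),
      S.comp (S'.comp S) = S ∧ S'.comp (S.comp S') = S' ∧
      T.comp (T'.comp T) = T ∧ T'.comp (T.comp T') = T' ∧
      IsFredholmPair S' T' ∧ IsRegularOp S' ∧ IsRegularOp T' ∧
      fpIndex S' T' = - fpIndex S T := by
  obtain ⟨hX, hY⟩ := (isFredholmPair_iff S T).mp h
  obtain ⟨MX, KX, hMX, hKX, hKMX, hIndX⟩ :=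
    exists_isTopCompl_relIndex_eq S.isClosed_ker hT.closedComplemented_range hX
  obtain ⟨MY, KY, hMY, hKY, hKMY, hIndY⟩ :=
    exists_isTopCompl_relIndex_eq T.isClosed_ker hS.closedComplemented_range hY
  obtain ⟨S', hSS'S, hS'SS', hkerS', hrangeS'⟩ := hS.exists_normalized_inverse hMX hKY
  obtain ⟨T', hTT'T, hT'TT', hkerT', hrangeT'⟩ := hT.exists_normalized_inverse hMY hKX
  refine ⟨S', T', hSS'S, hS'SS', hTT'T, hT'TT', ?_, ⟨S, hS'SS'⟩, ⟨T, hT'TT'⟩, ?_⟩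
  · rw [isFredholmPair_iff, hkerS', hrangeS', hkerT', hrangeT']
    exact ⟨hKMY, hKMX⟩
  · rw [fpIndex_eq_relIndex_sub_relIndex, fpIndex_eq_relIndex_sub_relIndex, hkerS', hrangeS',
      hkerT', hrangeT', hIndX, hIndY]
    ring
end

section
/- There exist Banach spaces X and Y over ℂ, a regular Fredholm pair (S,T) with S : X → Y and T : Y → X, and bounded linear operators S' : Y → X and T' : X → Y with S = S S' S and T = T T' T (i.e., S' and T' are generalized inverses of S and T), such that (S',T') is NOT a Fredholm pair; specifically, the quotient R(S')/(N(T')∩R(S')) is infinite-dimensional. -/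
open Module

/-!
On `V × V` the coordinate projections `P₁ (x, y) = (x, 0)` and `P₂ (x, y) = (0, y)` satisfy
`N(P₁) = R(P₂)` and `N(P₂) = R(P₁)`, so `(P₁, P₂)` is a Fredholm pair, and idempotents are their
own generalized inverses. But `(x, y) ↦ (x, x)` is a generalized inverse of `P₁` too; its range,
the diagonal, meets `N(P₂) = V × 0` only in `0`, so `R(S') / (N(T') ∩ R(S'))` is the diagonal,
a copy of `V`, which is infinite dimensional for `V = ℓ²`.
-/

open ContinuousLinearMap

section relQuot

variable {X : Type*} [AddCommGroup X] [Module ℂ X] {A B : Submodule ℂ X}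

lemma finiteDimensional_relQuot_of_le (h : A ≤ B) : FiniteDimensional ℂ (relQuot A B) :=
  haveI : Subsingleton (relQuot A B) :=
    Submodule.Quotient.subsingleton_iff.mpr (Submodule.comap_subtype_eq_top.mpr h)
  inferInstance

lemma not_finiteDimensional_relQuot_of_disjoint (h : Disjoint A B)
    (hA : ¬ FiniteDimensional ℂ A) : ¬ FiniteDimensional ℂ (relQuot A B) := fun _ =>
  hA (Submodule.quotEquivOfEqBot _ (Submodule.disjoint_iff_comap_eq_bot.mp h)).finiteDimensional

end relQuot

section operators

variable {X Y : Type*} [SeminormedAddCommGroup X] [NormedSpace ℂ X]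
  [SeminormedAddCommGroup Y] [NormedSpace ℂ Y]

lemma IsFredholmPair.of_ker_eq_range {S : X →L[ℂ] Y} {T : Y →L[ℂ] X}
    (hS : LinearMap.ker (S : X →ₗ[ℂ] Y) = LinearMap.range (T : Y →ₗ[ℂ] X))
    (hT : LinearMap.ker (T : Y →ₗ[ℂ] X) = LinearMap.range (S : X →ₗ[ℂ] Y)) :
    IsFredholmPair S T :=
  ⟨finiteDimensional_relQuot_of_le hS.le, finiteDimensional_relQuot_of_le hS.ge,
    finiteDimensional_relQuot_of_le hT.le, finiteDimensional_relQuot_of_le hT.ge⟩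

lemma IsRegularOp.of_idempotent {P : X →L[ℂ] X} (h : P.comp P = P) : IsRegularOp P :=
  ⟨P, by rw [h, h]⟩

end operators

lemma not_finiteDimensional_lp_two : ¬ FiniteDimensional ℂ (lp (fun _ : ℕ => ℂ) 2) := fun _ =>
  Finite.false
    (default : HilbertBasis ℕ ℂ (lp (fun _ : ℕ => ℂ) 2)).orthonormal.linearIndependent.finite

namespace ProdSelf

variable (V : Type*) [NormedAddCommGroup V] [NormedSpace ℂ V]

def projFst : V × V →L[ℂ] V × V := (inl ℂ V V).comp (fst ℂ V V)

def projSnd : V × V →L[ℂ] V × V := (inr ℂ V V).comp (snd ℂ V V)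

def diagFst : V × V →L[ℂ] V × V :=
  ((ContinuousLinearMap.id ℂ V).prod (ContinuousLinearMap.id ℂ V)).comp (fst ℂ V V)

@[simp] lemma projFst_apply (p : V × V) : projFst V p = (p.1, 0) := rfl
@[simp] lemma projSnd_apply (p : V × V) : projSnd V p = (0, p.2) := rfl
@[simp] lemma diagFst_apply (p : V × V) : diagFst V p = (p.1, p.1) := rfl

lemma ker_projFst : LinearMap.ker (projFst V : V × V →ₗ[ℂ] V × V) =
    LinearMap.range (projSnd V : V × V →ₗ[ℂ] V × V) := by
  ext ⟨x, y⟩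
  simp [Prod.ext_iff, eq_comm]

lemma ker_projSnd : LinearMap.ker (projSnd V : V × V →ₗ[ℂ] V × V) =
    LinearMap.range (projFst V : V × V →ₗ[ℂ] V × V) := by
  ext ⟨x, y⟩
  simp [Prod.ext_iff, eq_comm]

lemma projFst_comp_projFst : (projFst V).comp (projFst V) = projFst V := by
  ext <;> simp

lemma projSnd_comp_projSnd : (projSnd V).comp (projSnd V) = projSnd V := by
  ext <;> simp

lemma projFst_comp_diagFst_comp_projFst :
    (projFst V).comp ((diagFst V).comp (projFst V)) = projFst V := by
  ext <;> simp

lemma disjoint_range_diagFst_ker_projSnd :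
    Disjoint (LinearMap.range (diagFst V : V × V →ₗ[ℂ] V × V))
      (LinearMap.ker (projSnd V : V × V →ₗ[ℂ] V × V)) := by
  rw [Submodule.disjoint_def]
  rintro _ ⟨p, rfl⟩ h
  simp_all

lemma not_finiteDimensional_range_diagFst (hV : ¬ FiniteDimensional ℂ V) :
    ¬ FiniteDimensional ℂ (LinearMap.range (diagFst V : V × V →ₗ[ℂ] V × V)) := by
  intro _
  refine hV (FiniteDimensional.of_injective
    ((diagFst V : V × V →ₗ[ℂ] V × V).rangeRestrict.comp (LinearMap.inl ℂ V V)) ?_)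
  intro x y hxy
  simpa using congrArg Prod.fst (Subtype.ext_iff.mp hxy)

end ProdSelf

open ProdSelf in
/-- There exist Banach spaces `X`, `Y`, a regular Fredholm pair `(S,T)` and generalized
inverses `S'`, `T'` of `S`, `T` such that `(S',T')` is not a Fredholm pair; in fact
`R(S')/(N(T') ∩ R(S'))` is infinite dimensional. -/
theorem exists_regularFredholmPair_inverses_not_fredholmPair :
    ∃ (X Y : Type) (_ : NormedAddCommGroup X) (_ : NormedAddCommGroup Y)
      (_ : NormedSpace ℂ X) (_ : NormedSpace ℂ Y),
      CompleteSpace X ∧ CompleteSpace Y ∧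
      ∃ (S : X →L[ℂ] Y) (T : Y →L[ℂ] X) (S' : Y →L[ℂ] X) (T' : X →L[ℂ] Y),
        IsFredholmPair S T ∧ IsRegularOp S ∧ IsRegularOp T ∧
        S.comp (S'.comp S) = S ∧ T.comp (T'.comp T) = T ∧
        ¬ IsFredholmPair S' T' ∧
        ¬ FiniteDimensional ℂ (relQuot (LinearMap.range (S' : Y →ₗ[ℂ] X)) (LinearMap.ker (T' : X →ₗ[ℂ] Y))) := by
  let V := lp (fun _ : ℕ => ℂ) 2
  have hquot := not_finiteDimensional_relQuot_of_disjoint (disjoint_range_diagFst_ker_projSnd V)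
    (not_finiteDimensional_range_diagFst V not_finiteDimensional_lp_two)
  refine ⟨V × V, V × V, inferInstance, inferInstance, inferInstance, inferInstance,
    inferInstance, inferInstance, projFst V, projSnd V, diagFst V, projSnd V,
    .of_ker_eq_range (ker_projFst V) (ker_projSnd V), .of_idempotent (projFst_comp_projFst V),
    .of_idempotent (projSnd_comp_projSnd V), projFst_comp_diagFst_comp_projFst V, ?_,
    fun h => hquot h.2.2.2, hquot⟩
  rw [projSnd_comp_projSnd, projSnd_comp_projSnd]
end

section
/- Let X and Y be Banach spaces over ℂ and let (S,T) be a regular Fredholm pair, S : X → Y, T : Y → X. Define the subspaces R_{S,n} ⊆ Y and R_{T,n} ⊆ X by R_{S,0} = Y, R_{T,0} = X, R_{S,n+1} = S(R_{T,n}) and R_{T,n+1} = T(R_{S,n}). Then (R_{S,n}) and (R_{T,n}) are decreasing sequences of subspaces of Y and X respectively, and for every n ≥ 2 the subspaces R_{S,n} and R_{T,n} are finite-dimensional. -/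
/-!
Both sequences start at the whole space and each term is the image of the previous term of the
other sequence, so by induction they decrease. Moreover `R_{S,2} = S(R(T))` is isomorphic to
`R(T)/(N(S) ∩ R(T))`, finite-dimensional for a Fredholm pair, and likewise `R_{T,2}`; every later
term is contained in these.
-/

open Module

theorem Submodule.finite_map_of_finite_quotient_ker {R M N : Type*} [Ring R]
    [AddCommGroup M] [Module R M] [AddCommGroup N] [Module R N] (f : M →ₗ[R] N)
    (A : Submodule R M) [Module.Finite R (A ⧸ (LinearMap.ker f).comap A.subtype)] :
    Module.Finite R (A.map f) := by
  have e := (f.comp A.subtype).quotKerEquivRange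
  rw [LinearMap.ker_comp, LinearMap.range_comp, Submodule.range_subtype] at e
  exact Module.Finite.equiv e

section AlternatingImages

variable {R M N : Type*} [Semiring R] [AddCommMonoid M] [Module R M] [AddCommMonoid N]
  [Module R N] {f : M →ₗ[R] N} {g : N →ₗ[R] M} {a : ℕ → Submodule R N} {b : ℕ → Submodule R M}

theorem antitone_of_alternating_images (ha0 : a 0 = ⊤) (hb0 : b 0 = ⊤)
    (ha : ∀ n, a (n + 1) = (b n).map f) (hb : ∀ n, b (n + 1) = (a n).map g) : Antitone a := by
  suffices ∀ n, a (n + 1) ≤ a n ∧ b (n + 1) ≤ b n from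
    antitone_nat_of_succ_le fun n => (this n).1
  intro n
  induction n with
  | zero => simp [ha0, hb0]
  | succ n ih =>
    constructor
    · rw [ha (n + 1), ha n]
      exact Submodule.map_mono ih.2
    · rw [hb (n + 1), hb n]
      exact Submodule.map_mono ih.1

theorem alternating_images_two (ha0 : a 0 = ⊤) (ha : ∀ n, a (n + 1) = (b n).map f)
    (hb : ∀ n, b (n + 1) = (a n).map g) : a 2 = (LinearMap.range g).map f := by
  rw [ha 1, hb 0, ha0, ← LinearMap.range_eq_map]

end AlternatingImages

theorem regularFredholmPair_ranges_antitone_finiteDim_general {X Y : Type*}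
    [NormedAddCommGroup X] [NormedSpace ℂ X]
    [NormedAddCommGroup Y] [NormedSpace ℂ Y]
    (S : X →L[ℂ] Y) (T : Y →L[ℂ] X) (h : IsFredholmPair S T)
    (RS : ℕ → Submodule ℂ Y) (RT : ℕ → Submodule ℂ X)
    (hRS0 : RS 0 = ⊤) (hRT0 : RT 0 = ⊤)
    (hRS : ∀ n, RS (n + 1) = Submodule.map (S : X →ₗ[ℂ] Y) (RT n))
    (hRT : ∀ n, RT (n + 1) = Submodule.map (T : Y →ₗ[ℂ] X) (RS n)) :
    (∀ n, RS (n + 1) ≤ RS n) ∧ (∀ n, RT (n + 1) ≤ RT n) ∧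
    (∀ n, 2 ≤ n → FiniteDimensional ℂ ↥(RS n) ∧ FiniteDimensional ℂ ↥(RT n)) := by
  have hRS_anti : Antitone RS := antitone_of_alternating_images hRS0 hRT0 hRS hRT
  have hRT_anti : Antitone RT := antitone_of_alternating_images hRT0 hRS0 hRT hRS
  obtain ⟨-, hRanT, -, hRanS⟩ := h
  have hRS2 : FiniteDimensional ℂ (RS 2) := by
    rw [alternating_images_two hRS0 hRS hRT]
    exact Submodule.finite_map_of_finite_quotient_ker _ _
  have hRT2 : FiniteDimensional ℂ (RT 2) := by
    rw [alternating_images_two hRT0 hRT hRS]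
    exact Submodule.finite_map_of_finite_quotient_ker _ _
  exact ⟨fun n => hRS_anti n.le_succ, fun n => hRT_anti n.le_succ, fun n hn =>
    ⟨Submodule.finiteDimensional_of_le (hRS_anti hn),
      Submodule.finiteDimensional_of_le (hRT_anti hn)⟩⟩

/-- For a regular Fredholm pair `(S,T)` the sequences `R_{S,n}`, `R_{T,n}` defined by
`R_{S,0} = Y`, `R_{T,0} = X`, `R_{S,n+1} = S(R_{T,n})`, `R_{T,n+1} = T(R_{S,n})` are
decreasing, and for `n ≥ 2` they are finite dimensional. -/
theorem regularFredholmPair_ranges_antitone_finiteDim {X Y : Type*}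
    [NormedAddCommGroup X] [NormedSpace ℂ X] [CompleteSpace X]
    [NormedAddCommGroup Y] [NormedSpace ℂ Y] [CompleteSpace Y]
    (S : X →L[ℂ] Y) (T : Y →L[ℂ] X) (h : IsFredholmPair S T)
    (hS : IsRegularOp S) (hT : IsRegularOp T)
    (RS : ℕ → Submodule ℂ Y) (RT : ℕ → Submodule ℂ X)
    (hRS0 : RS 0 = ⊤) (hRT0 : RT 0 = ⊤)
    (hRS : ∀ n, RS (n + 1) = Submodule.map (S : X →ₗ[ℂ] Y) (RT n))
    (hRT : ∀ n, RT (n + 1) = Submodule.map (T : Y →ₗ[ℂ] X) (RS n)) :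
    (∀ n, RS (n + 1) ≤ RS n) ∧ (∀ n, RT (n + 1) ≤ RT n) ∧
    (∀ n, 2 ≤ n → FiniteDimensional ℂ ↥(RS n) ∧ FiniteDimensional ℂ ↥(RT n)) :=
  regularFredholmPair_ranges_antitone_finiteDim_general S T h RS RT hRS0 hRT0 hRS hRT
end

section
/- Let X and Y be Banach spaces over ℂ and let (S,T) be a regular Fredholm pair, S : X → Y, T : Y → X. Define R_{S,0} = Y, R_{T,0} = X, R_{S,n+1} = S(R_{T,n}), R_{T,n+1} = T(R_{S,n}). Then there exist p, q ∈ ℕ, p, q ≥ 1, such that R_{S,p} = R_{S,p+k} for all k ≥ 0 and R_{T,q} = R_{T,q+k} for all k ≥ 0. Moreover, if p and q are chosen minimal with these properties, then |p − q| ≤ 1. -/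
/-!
Since `S(R(T)) ≅ R(T) / (N(S) ∩ R(T))`, the Fredholm condition makes `R_{S,2} = S(R(T))` and
`R_{T,2} = T(R(S))` finite dimensional. The chains `R_{S,n}` and `R_{T,n}` decrease, so each is
constant from the index where its dimension is minimal on. If `R_{T,n}` is constant from `q` on,
then `R_{S,n+1} = S(R_{T,n})` is constant from `q + 1` on, and symmetrically; hence `|p - q| ≤ 1`.
-/

open Module

theorem finiteDimensional_map_of_relQuot {M N : Type*} [AddCommGroup M] [Module ℂ M]
    [AddCommGroup N] [Module ℂ N] (f : M →ₗ[ℂ] N) (A : Submodule ℂ M)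
    [FiniteDimensional ℂ (relQuot A (LinearMap.ker f))] : FiniteDimensional ℂ (A.map f) := by
  rw [← LinearMap.range_domRestrict, ← Submodule.range_liftQ _ (f.domRestrict A)
    (LinearMap.ker_domRestrict A f).ge]
  infer_instance

theorem Submodule.exists_forall_add_eq_of_antitone {M : Type*} [AddCommGroup M] [Module ℂ M]
    {R : ℕ → Submodule ℂ M} (hR : Antitone R) (n₀ : ℕ) [FiniteDimensional ℂ (R n₀)] :
    ∃ p, n₀ ≤ p ∧ ∀ k, R (p + k) = R p := by
  obtain ⟨m, hm⟩ : ∃ m, ∀ n, finrank ℂ (R (n₀ + m)) ≤ finrank ℂ (R (n₀ + n)) :=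
    ⟨_, fun n => Function.argmin_le (fun n => finrank ℂ (R (n₀ + n))) n⟩
  refine ⟨n₀ + m, by omega, fun k => ?_⟩
  have : FiniteDimensional ℂ (R (n₀ + m)) :=
    Submodule.finiteDimensional_of_le (hR (Nat.le_add_right n₀ m))
  refine Submodule.eq_of_le_of_finrank_le (hR (Nat.le_add_right _ k)) ?_
  rw [add_assoc]
  exact hm (m + k)

section AlternatingRanges

variable {X Y : Type*} [AddCommGroup X] [Module ℂ X] [AddCommGroup Y] [Module ℂ Y]
  {S : X →ₗ[ℂ] Y} {T : Y →ₗ[ℂ] X} {RS : ℕ → Submodule ℂ Y} {RT : ℕ → Submodule ℂ X}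

theorem antitone_alternatingRanges (hRS0 : RS 0 = ⊤) (hRT0 : RT 0 = ⊤)
    (hRS : ∀ n, RS (n + 1) = (RT n).map S) (hRT : ∀ n, RT (n + 1) = (RS n).map T) :
    Antitone RS ∧ Antitone RT := by
  have hstep : ∀ n, RS (n + 1) ≤ RS n ∧ RT (n + 1) ≤ RT n := by
    intro n
    induction n with
    | zero => exact ⟨hRS0 ▸ le_top, hRT0 ▸ le_top⟩
    | succ n ih =>
      constructor
      · rw [hRS (n + 1), hRS n]
        exact Submodule.map_mono ih.2
      · rw [hRT (n + 1), hRT n]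
        exact Submodule.map_mono ih.1
  exact ⟨antitone_nat_of_succ_le fun n => (hstep n).1, antitone_nat_of_succ_le fun n => (hstep n).2⟩

theorem alternatingRanges_two (hRT0 : RT 0 = ⊤) (hRS : ∀ n, RS (n + 1) = (RT n).map S)
    (hRT : ∀ n, RT (n + 1) = (RS n).map T) : RT 2 = (LinearMap.range S).map T := by
  rw [hRT 1, hRS 0, hRT0, Submodule.map_top]

theorem alternatingRanges_stable_succ (hRS : ∀ n, RS (n + 1) = (RT n).map S) {q : ℕ}
    (hq : ∀ k, RT (q + k) = RT q) : ∀ k, RS (q + 1 + k) = RS (q + 1) := by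
  intro k
  rw [add_right_comm, hRS, hRS, hq]

end AlternatingRanges

theorem regularFredholmPair_stabilizes_general {X Y : Type*}
    [NormedAddCommGroup X] [NormedSpace ℂ X]
    [NormedAddCommGroup Y] [NormedSpace ℂ Y]
    (S : X →L[ℂ] Y) (T : Y →L[ℂ] X) (h : IsFredholmPair S T)
    (RS : ℕ → Submodule ℂ Y) (RT : ℕ → Submodule ℂ X)
    (hRS0 : RS 0 = ⊤) (hRT0 : RT 0 = ⊤)
    (hRS : ∀ n, RS (n + 1) = Submodule.map (S : X →ₗ[ℂ] Y) (RT n))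
    (hRT : ∀ n, RT (n + 1) = Submodule.map (T : Y →ₗ[ℂ] X) (RS n)) :
    (∃ p q : ℕ, 1 ≤ p ∧ 1 ≤ q ∧ (∀ k, RS (p + k) = RS p) ∧ (∀ k, RT (q + k) = RT q)) ∧
    (∀ p q : ℕ,
      IsLeast {n : ℕ | 1 ≤ n ∧ ∀ k, RS (n + k) = RS n} p →
      IsLeast {n : ℕ | 1 ≤ n ∧ ∀ k, RT (n + k) = RT n} q →
      p ≤ q + 1 ∧ q ≤ p + 1) := by
  obtain ⟨-, hRangeT, -, hRangeS⟩ := h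
  obtain ⟨hSanti, hTanti⟩ := antitone_alternatingRanges hRS0 hRT0 hRS hRT
  have : FiniteDimensional ℂ (RS 2) :=
    alternatingRanges_two hRS0 hRT hRS ▸ finiteDimensional_map_of_relQuot _ _
  have : FiniteDimensional ℂ (RT 2) :=
    alternatingRanges_two hRT0 hRS hRT ▸ finiteDimensional_map_of_relQuot _ _
  obtain ⟨p, hp2, hpstab⟩ := Submodule.exists_forall_add_eq_of_antitone hSanti 2
  obtain ⟨q, hq2, hqstab⟩ := Submodule.exists_forall_add_eq_of_antitone hTanti 2
  refine ⟨⟨p, q, by omega, by omega, hpstab, hqstab⟩, fun p q hpmin hqmin => ⟨?_, ?_⟩⟩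
  · exact hpmin.2 ⟨by omega, alternatingRanges_stable_succ hRS hqmin.1.2⟩
  · exact hqmin.2 ⟨by omega, alternatingRanges_stable_succ hRT hpmin.1.2⟩

/-- For a regular Fredholm pair `(S,T)` the sequences `R_{S,n}` and `R_{T,n}` stabilize
from some indices `p, q ≥ 1` on; moreover the minimal such indices differ by at most 1. -/
theorem regularFredholmPair_stabilizes {X Y : Type*}
    [NormedAddCommGroup X] [NormedSpace ℂ X] [CompleteSpace X]
    [NormedAddCommGroup Y] [NormedSpace ℂ Y] [CompleteSpace Y]
    (S : X →L[ℂ] Y) (T : Y →L[ℂ] X) (h : IsFredholmPair S T)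
    (hS : IsRegularOp S) (hT : IsRegularOp T)
    (RS : ℕ → Submodule ℂ Y) (RT : ℕ → Submodule ℂ X)
    (hRS0 : RS 0 = ⊤) (hRT0 : RT 0 = ⊤)
    (hRS : ∀ n, RS (n + 1) = Submodule.map (S : X →ₗ[ℂ] Y) (RT n))
    (hRT : ∀ n, RT (n + 1) = Submodule.map (T : Y →ₗ[ℂ] X) (RS n)) :
    (∃ p q : ℕ, 1 ≤ p ∧ 1 ≤ q ∧ (∀ k, RS (p + k) = RS p) ∧ (∀ k, RT (q + k) = RT q)) ∧
    (∀ p q : ℕ,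
      IsLeast {n : ℕ | 1 ≤ n ∧ ∀ k, RS (n + k) = RS n} p →
      IsLeast {n : ℕ | 1 ≤ n ∧ ∀ k, RT (n + k) = RT n} q →
      p ≤ q + 1 ∧ q ≤ p + 1) :=
  regularFredholmPair_stabilizes_general S T h RS RT hRS0 hRT0 hRS hRT
end

section
/- Let X and Y be Banach spaces over ℂ and let (S,T) be a regular Fredholm pair, S : X → Y, T : Y → X. Define R_{S,0} = Y, R_{T,0} = X, R_{S,n+1} = S(R_{T,n}), R_{T,n+1} = T(R_{S,n}), and suppose that R_{S,n} = R(S) and R_{T,n} = R(T) for all n ≥ 1 (i.e., the case of the pair is I-1). Then X and Y are finite-dimensional, N(S) ∩ R(T) = 0, N(T) ∩ R(S) = 0, X = N(S) ⊕ R(T), Y = N(T) ⊕ R(S), S restricts to a linear isomorphism from R(T) onto R(S), T restricts to a linear isomorphism from R(S) onto R(T), and ind(S,T) = dim N(S) − dim N(T). -/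
open Module

/-!
In case I-1 the ranges are stable: `S(R(T)) = R(S)` and `T(R(S)) = R(T)`. Since
`R(T)/(N(S) ∩ R(T)) ≅ S(R(T))`, the Fredholm condition makes both ranges finite dimensional, and
the two surjections `R(T) → R(S) → R(T)` force `dim R(S) = dim R(T)`, so both are injective:
`N(S) ∩ R(T) = 0` and `N(T) ∩ R(S) = 0`. Stability of the range then gives `X = N(S) ⊕ R(T)`
(any `x` differs from some `a ∈ R(T)` with `S x = S a` by an element of `N(S)`), and the four
relative quotients in the index reduce to `N(S)`, `R(S)`, `N(T)`, `R(T)`.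
-/

namespace Submodule

section Ring

variable {R V W : Type*} [Ring R] [AddCommGroup V] [Module R V] [AddCommGroup W] [Module R W]

noncomputable def quotientComapKerEquivMap (f : V →ₗ[R] W) (A : Submodule R V) :
    (A ⧸ (LinearMap.ker f).comap A.subtype) ≃ₗ[R] A.map f :=
  (quotEquivOfEq _ _ (LinearMap.ker_domRestrict A f).symm).trans
    ((f.domRestrict A).quotKerEquivRange.trans
      (LinearEquiv.ofEq _ _ (LinearMap.range_domRestrict A f)))

noncomputable def quotientComapEquivOfDisjoint {A B : Submodule R V} (h : Disjoint A B) :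
    (A ⧸ B.comap A.subtype) ≃ₗ[R] A :=
  quotEquivOfEqBot _ (disjoint_iff_comap_eq_bot.mp h)

theorem isCompl_ker_of_disjoint_of_map_eq_range {f : V →ₗ[R] W} {A : Submodule R V}
    (hd : Disjoint (LinearMap.ker f) A) (hA : A.map f = LinearMap.range f) :
    IsCompl (LinearMap.ker f) A := by
  refine ⟨hd, codisjoint_iff.mpr (eq_top_iff.mpr fun x _ => ?_)⟩
  obtain ⟨a, ha, hfa⟩ : f x ∈ A.map f := hA ▸ LinearMap.mem_range_self f x
  have hker : x - a ∈ LinearMap.ker f := by simp [hfa]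
  simpa using add_mem_sup hker ha

end Ring

section Field

variable {K V W : Type*} [Field K] [AddCommGroup V] [Module K V] [AddCommGroup W] [Module K W]
  {f : V →ₗ[K] W} {g : W →ₗ[K] V} {A : Submodule K V} {B : Submodule K W} [FiniteDimensional K A]

theorem finrank_eq_of_map_eq_of_map_eq (hf : A.map f = B) (hg : B.map g = A) :
    finrank K A = finrank K B := by
  have : FiniteDimensional K B := hf ▸ inferInstance
  exact le_antisymm (hg ▸ finrank_map_le g B) (hf ▸ finrank_map_le f A)

theorem disjoint_ker_of_map_eq_of_map_eq (hf : A.map f = B) (hg : B.map g = A) :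
    Disjoint A (LinearMap.ker f) := by
  rw [← LinearMap.injective_domRestrict_iff, ← LinearMap.ker_eq_bot, ← finrank_eq_zero]
  have hrank := (f.domRestrict A).finrank_range_add_finrank_ker
  rw [LinearMap.range_domRestrict, hf, ← finrank_eq_of_map_eq_of_map_eq hf hg] at hrank
  omega

end Field

end Submodule

open Submodule in
theorem regularFredholmPair_case_I_1_general {X Y : Type*}
    [NormedAddCommGroup X] [NormedSpace ℂ X]
    [NormedAddCommGroup Y] [NormedSpace ℂ Y]
    (S : X →L[ℂ] Y) (T : Y →L[ℂ] X) (h : IsFredholmPair S T)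
    (RS : ℕ → Submodule ℂ Y) (RT : ℕ → Submodule ℂ X)
    (hRS : ∀ n, RS (n + 1) = Submodule.map (S : X →ₗ[ℂ] Y) (RT n))
    (hRT : ∀ n, RT (n + 1) = Submodule.map (T : Y →ₗ[ℂ] X) (RS n))
    (hcase : ∀ n, 1 ≤ n → RS n = LinearMap.range (S : X →ₗ[ℂ] Y) ∧ RT n = LinearMap.range (T : Y →ₗ[ℂ] X)) :
    FiniteDimensional ℂ X ∧ FiniteDimensional ℂ Y ∧
    LinearMap.ker (S : X →ₗ[ℂ] Y) ⊓ LinearMap.range (T : Y →ₗ[ℂ] X) = ⊥ ∧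
    LinearMap.ker (T : Y →ₗ[ℂ] X) ⊓ LinearMap.range (S : X →ₗ[ℂ] Y) = ⊥ ∧
    IsCompl (LinearMap.ker (S : X →ₗ[ℂ] Y)) (LinearMap.range (T : Y →ₗ[ℂ] X)) ∧
    IsCompl (LinearMap.ker (T : Y →ₗ[ℂ] X)) (LinearMap.range (S : X →ₗ[ℂ] Y)) ∧
    Submodule.map (S : X →ₗ[ℂ] Y) (LinearMap.range (T : Y →ₗ[ℂ] X)) = LinearMap.range (S : X →ₗ[ℂ] Y) ∧
    Submodule.map (T : Y →ₗ[ℂ] X) (LinearMap.range (S : X →ₗ[ℂ] Y)) = LinearMap.range (T : Y →ₗ[ℂ] X) ∧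
    fpIndex S T = (finrank ℂ ↥(LinearMap.ker (S : X →ₗ[ℂ] Y)) : ℤ) - (finrank ℂ ↥(LinearMap.ker (T : Y →ₗ[ℂ] X)) : ℤ) := by
  obtain ⟨hNS, hRTS, hNT, hRST⟩ := h
  have hmapS : map (S : X →ₗ[ℂ] Y) (LinearMap.range (T : Y →ₗ[ℂ] X)) =
      LinearMap.range (S : X →ₗ[ℂ] Y) := by
    rw [← (hcase 1 le_rfl).2, ← hRS, (hcase 2 one_le_two).1]
  have hmapT : map (T : Y →ₗ[ℂ] X) (LinearMap.range (S : X →ₗ[ℂ] Y)) =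
      LinearMap.range (T : Y →ₗ[ℂ] X) := by
    rw [← (hcase 1 le_rfl).1, ← hRT, (hcase 2 one_le_two).2]
  let eS := (quotientComapKerEquivMap _ _).trans (LinearEquiv.ofEq _ _ hmapS)
  let eT := (quotientComapKerEquivMap _ _).trans (LinearEquiv.ofEq _ _ hmapT)
  have := eS.finiteDimensional
  have := eT.finiteDimensional
  have hdS := disjoint_ker_of_map_eq_of_map_eq hmapS hmapT
  have hdT := disjoint_ker_of_map_eq_of_map_eq hmapT hmapS
  let eNS := quotientComapEquivOfDisjoint hdS.symm
  let eNT := quotientComapEquivOfDisjoint hdT.symm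
  have := eNS.finiteDimensional
  have := eNT.finiteDimensional
  have hcS := isCompl_ker_of_disjoint_of_map_eq_range hdS.symm hmapS
  have hcT := isCompl_ker_of_disjoint_of_map_eq_range hdT.symm hmapT
  refine ⟨(prodEquivOfIsCompl _ _ hcS).finiteDimensional,
    (prodEquivOfIsCompl _ _ hcT).finiteDimensional, disjoint_iff.mp hcS.disjoint,
    disjoint_iff.mp hcT.disjoint, hcS, hcT, hmapS, hmapT, ?_⟩
  simp only [fpIndex, relDim, eNS.finrank_eq, eNT.finrank_eq, eS.finrank_eq, eT.finrank_eq,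
    finrank_eq_of_map_eq_of_map_eq hmapS hmapT]
  ring

/-- Case I-1 of the classification: if `R_{S,n} = R(S)` and `R_{T,n} = R(T)` for all
`n ≥ 1`, then `X` and `Y` are finite dimensional, `N(S) ∩ R(T) = 0`, `N(T) ∩ R(S) = 0`,
`X = N(S) ⊕ R(T)`, `Y = N(T) ⊕ R(S)`, `S` and `T` restrict to mutually inverse
isomorphisms between `R(T)` and `R(S)`, and `ind (S,T) = dim N(S) - dim N(T)`. -/
theorem regularFredholmPair_case_I_1 {X Y : Type*}
    [NormedAddCommGroup X] [NormedSpace ℂ X] [CompleteSpace X]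
    [NormedAddCommGroup Y] [NormedSpace ℂ Y] [CompleteSpace Y]
    (S : X →L[ℂ] Y) (T : Y →L[ℂ] X) (h : IsFredholmPair S T)
    (hS : IsRegularOp S) (hT : IsRegularOp T)
    (RS : ℕ → Submodule ℂ Y) (RT : ℕ → Submodule ℂ X)
    (hRS0 : RS 0 = ⊤) (hRT0 : RT 0 = ⊤)
    (hRS : ∀ n, RS (n + 1) = Submodule.map (S : X →ₗ[ℂ] Y) (RT n))
    (hRT : ∀ n, RT (n + 1) = Submodule.map (T : Y →ₗ[ℂ] X) (RS n))
    (hcase : ∀ n, 1 ≤ n → RS n = LinearMap.range (S : X →ₗ[ℂ] Y) ∧ RT n = LinearMap.range (T : Y →ₗ[ℂ] X)) :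
    FiniteDimensional ℂ X ∧ FiniteDimensional ℂ Y ∧
    LinearMap.ker (S : X →ₗ[ℂ] Y) ⊓ LinearMap.range (T : Y →ₗ[ℂ] X) = ⊥ ∧
    LinearMap.ker (T : Y →ₗ[ℂ] X) ⊓ LinearMap.range (S : X →ₗ[ℂ] Y) = ⊥ ∧
    IsCompl (LinearMap.ker (S : X →ₗ[ℂ] Y)) (LinearMap.range (T : Y →ₗ[ℂ] X)) ∧
    IsCompl (LinearMap.ker (T : Y →ₗ[ℂ] X)) (LinearMap.range (S : X →ₗ[ℂ] Y)) ∧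
    Submodule.map (S : X →ₗ[ℂ] Y) (LinearMap.range (T : Y →ₗ[ℂ] X)) = LinearMap.range (S : X →ₗ[ℂ] Y) ∧
    Submodule.map (T : Y →ₗ[ℂ] X) (LinearMap.range (S : X →ₗ[ℂ] Y)) = LinearMap.range (T : Y →ₗ[ℂ] X) ∧
    fpIndex S T = (finrank ℂ ↥(LinearMap.ker (S : X →ₗ[ℂ] Y)) : ℤ) - (finrank ℂ ↥(LinearMap.ker (T : Y →ₗ[ℂ] X)) : ℤ) :=
  regularFredholmPair_case_I_1_general S T h RS RT hRS hRT hcase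
end

section
/- Let X and Y be Banach spaces over ℂ and let (S,T) be a regular Fredholm pair, S : X → Y, T : Y → X. Then ind(S,T) = [dim N(S)/(N(S)∩R(T)) + dim(N(S) ∩ R(T∘S))] − [dim N(T)/(N(T)∩R(S)) + dim R(S∘T) − dim R(S∘T∘S)], and also ind(S,T) = [dim N(S)/(N(S)∩R(T)) + dim R(T∘S) − dim R(T∘S∘T)] − [dim N(T)/(N(T)∩R(S)) + dim(N(T) ∩ R(S∘T))]. -/
/-!
The map `S` identifies `R(T)/(N(S) ∩ R(T))` with `S(R(T)) = R(S∘T)`, so `b = dim R(S∘T)`, and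
likewise `d = dim R(T∘S)`; both spaces are finite dimensional. Rank–nullity for `S` restricted to
`R(T∘S)` gives `dim R(T∘S) = dim R(S∘T∘S) + dim (N(S) ∩ R(T∘S))`, and for `T` restricted to
`R(S∘T)` gives `dim R(S∘T) = dim R(T∘S∘T) + dim (N(T) ∩ R(S∘T))`. Substituting into
`a - b - c + d` yields both formulas.
-/

open Module

namespace LinearMap

variable {K U V W : Type*} [DivisionRing K] [AddCommGroup U] [Module K U]
  [AddCommGroup V] [Module K V] [AddCommGroup W] [Module K W]

noncomputable def quotComapKerEquivMap (f : V →ₗ[K] W) (A : Submodule K V) :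
    (A ⧸ (ker f).comap A.subtype) ≃ₗ[K] A.map f :=
  (Submodule.quotEquivOfEq _ _ (ker_domRestrict A f).symm).trans
    ((f.domRestrict A).quotKerEquivRange.trans (LinearEquiv.ofEq _ _ (range_domRestrict A f)))

theorem finrank_map_add_finrank_ker_inf (f : V →ₗ[K] W) (A : Submodule K V)
    [FiniteDimensional K A] :
    finrank K (A.map f) + finrank K ↥(ker f ⊓ A) = finrank K A := by
  have hcomap : (ker f ⊓ A).comap A.subtype = (ker f).comap A.subtype := by
    rw [Submodule.comap_inf, Submodule.comap_subtype_self, inf_top_eq]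
  rw [← (quotComapKerEquivMap f A).finrank_eq,
    ← (Submodule.comapSubtypeEquivOfLe (inf_le_right : ker f ⊓ A ≤ A)).finrank_eq, hcomap]
  exact Submodule.finrank_quotient_add_finrank _

theorem finrank_range_comp (f : V →ₗ[K] W) (g : U →ₗ[K] V) :
    finrank K (range (f ∘ₗ g)) = finrank K (range g ⧸ (ker f).comap (range g).subtype) := by
  rw [range_comp]
  exact (quotComapKerEquivMap f _).finrank_eq.symm

theorem finiteDimensional_range_comp (f : V →ₗ[K] W) (g : U →ₗ[K] V)
    [FiniteDimensional K (range g ⧸ (ker f).comap (range g).subtype)] :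
    FiniteDimensional K (range (f ∘ₗ g)) := by
  rw [range_comp]
  exact Module.Finite.equiv (quotComapKerEquivMap f _)

theorem finrank_range_comp_add_finrank_ker_inf_range (f : V →ₗ[K] W) (g : U →ₗ[K] V)
    [FiniteDimensional K (range g)] :
    finrank K (range (f ∘ₗ g)) + finrank K ↥(ker f ⊓ range g) = finrank K (range g) := by
  rw [range_comp]
  exact finrank_map_add_finrank_ker_inf f _

end LinearMap

open LinearMap

theorem regularFredholmPair_index_formula_general {X Y : Type*}
    [NormedAddCommGroup X] [NormedSpace ℂ X]
    [NormedAddCommGroup Y] [NormedSpace ℂ Y]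
    (S : X →L[ℂ] Y) (T : Y →L[ℂ] X) (h : IsFredholmPair S T) :
    fpIndex S T =
      ((relDim (LinearMap.ker (S : X →ₗ[ℂ] Y)) (LinearMap.range (T : Y →ₗ[ℂ] X)) : ℤ) +
          (finrank ℂ ↥(LinearMap.ker (S : X →ₗ[ℂ] Y) ⊓ LinearMap.range (T.comp S : X →ₗ[ℂ] X)) : ℤ)) -
        ((relDim (LinearMap.ker (T : Y →ₗ[ℂ] X)) (LinearMap.range (S : X →ₗ[ℂ] Y)) : ℤ) +
          (finrank ℂ ↥(LinearMap.range (S.comp T : Y →ₗ[ℂ] Y)) : ℤ) -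
          (finrank ℂ ↥(LinearMap.range (S.comp (T.comp S) : X →ₗ[ℂ] Y)) : ℤ)) ∧
    fpIndex S T =
      ((relDim (LinearMap.ker (S : X →ₗ[ℂ] Y)) (LinearMap.range (T : Y →ₗ[ℂ] X)) : ℤ) +
          (finrank ℂ ↥(LinearMap.range (T.comp S : X →ₗ[ℂ] X)) : ℤ) -
          (finrank ℂ ↥(LinearMap.range (T.comp (S.comp T) : Y →ₗ[ℂ] X)) : ℤ)) -
        ((relDim (LinearMap.ker (T : Y →ₗ[ℂ] X)) (LinearMap.range (S : X →ₗ[ℂ] Y)) : ℤ) +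
          (finrank ℂ ↥(LinearMap.ker (T : Y →ₗ[ℂ] X) ⊓ LinearMap.range (S.comp T : Y →ₗ[ℂ] Y)) : ℤ)) := by
  obtain ⟨-, hb, -, hd⟩ := h
  have hST : relDim (range (T : Y →ₗ[ℂ] X)) (ker (S : X →ₗ[ℂ] Y)) =
      finrank ℂ (range (S.comp T : Y →ₗ[ℂ] Y)) :=
    (finrank_range_comp (S : X →ₗ[ℂ] Y) (T : Y →ₗ[ℂ] X)).symm
  have hTS : relDim (range (S : X →ₗ[ℂ] Y)) (ker (T : Y →ₗ[ℂ] X)) =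
      finrank ℂ (range (T.comp S : X →ₗ[ℂ] X)) :=
    (finrank_range_comp (T : Y →ₗ[ℂ] X) (S : X →ₗ[ℂ] Y)).symm
  have : FiniteDimensional ℂ (range (S.comp T : Y →ₗ[ℂ] Y)) :=
    finiteDimensional_range_comp (S : X →ₗ[ℂ] Y) (T : Y →ₗ[ℂ] X)
  have : FiniteDimensional ℂ (range (T.comp S : X →ₗ[ℂ] X)) :=
    finiteDimensional_range_comp (T : Y →ₗ[ℂ] X) (S : X →ₗ[ℂ] Y)
  have hSTS : finrank ℂ (range (S.comp (T.comp S) : X →ₗ[ℂ] Y)) +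
      finrank ℂ ↥(ker (S : X →ₗ[ℂ] Y) ⊓ range (T.comp S : X →ₗ[ℂ] X)) =
      finrank ℂ (range (T.comp S : X →ₗ[ℂ] X)) :=
    finrank_range_comp_add_finrank_ker_inf_range (S : X →ₗ[ℂ] Y) (T.comp S : X →ₗ[ℂ] X)
  have hTST : finrank ℂ (range (T.comp (S.comp T) : Y →ₗ[ℂ] X)) +
      finrank ℂ ↥(ker (T : Y →ₗ[ℂ] X) ⊓ range (S.comp T : Y →ₗ[ℂ] Y)) =
      finrank ℂ (range (S.comp T : Y →ₗ[ℂ] Y)) :=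
    finrank_range_comp_add_finrank_ker_inf_range (T : Y →ₗ[ℂ] X) (S.comp T : Y →ₗ[ℂ] Y)
  rw [fpIndex]
  constructor <;> omega

/-- Index formulas for a regular Fredholm pair (Theorem 4.1):
`ind (S,T) = [a + dim (N(S) ∩ R(T∘S))] - [c + dim R(S∘T) - dim R(S∘T∘S)]`
and
`ind (S,T) = [a + dim R(T∘S) - dim R(T∘S∘T)] - [c + dim (N(T) ∩ R(S∘T))]`. -/
theorem regularFredholmPair_index_formula {X Y : Type*}
    [NormedAddCommGroup X] [NormedSpace ℂ X] [CompleteSpace X]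
    [NormedAddCommGroup Y] [NormedSpace ℂ Y] [CompleteSpace Y]
    (S : X →L[ℂ] Y) (T : Y →L[ℂ] X) (h : IsFredholmPair S T)
    (hS : IsRegularOp S) (hT : IsRegularOp T) :
    fpIndex S T =
      ((relDim (LinearMap.ker (S : X →ₗ[ℂ] Y)) (LinearMap.range (T : Y →ₗ[ℂ] X)) : ℤ) +
          (finrank ℂ ↥(LinearMap.ker (S : X →ₗ[ℂ] Y) ⊓ LinearMap.range (T.comp S : X →ₗ[ℂ] X)) : ℤ)) -
        ((relDim (LinearMap.ker (T : Y →ₗ[ℂ] X)) (LinearMap.range (S : X →ₗ[ℂ] Y)) : ℤ) +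
          (finrank ℂ ↥(LinearMap.range (S.comp T : Y →ₗ[ℂ] Y)) : ℤ) -
          (finrank ℂ ↥(LinearMap.range (S.comp (T.comp S) : X →ₗ[ℂ] Y)) : ℤ)) ∧
    fpIndex S T =
      ((relDim (LinearMap.ker (S : X →ₗ[ℂ] Y)) (LinearMap.range (T : Y →ₗ[ℂ] X)) : ℤ) +
          (finrank ℂ ↥(LinearMap.range (T.comp S : X →ₗ[ℂ] X)) : ℤ) -
          (finrank ℂ ↥(LinearMap.range (T.comp (S.comp T) : Y →ₗ[ℂ] X)) : ℤ)) -
        ((relDim (LinearMap.ker (T : Y →ₗ[ℂ] X)) (LinearMap.range (S : X →ₗ[ℂ] Y)) : ℤ) +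
          (finrank ℂ ↥(LinearMap.ker (T : Y →ₗ[ℂ] X) ⊓ LinearMap.range (S.comp T : Y →ₗ[ℂ] Y)) : ℤ)) :=
  regularFredholmPair_index_formula_general S T h
end

section
/- Let X and Y be Banach spaces over ℂ and let (S,T) be a regular Fredholm pair, S : X → Y, T : Y → X. Define R_{S,0} = Y, R_{T,0} = X, R_{S,n+1} = S(R_{T,n}), R_{T,n+1} = T(R_{S,n}). Suppose that the number of the pair (S,T) is 1, i.e., R_{S,n} = R(S) for all n ≥ 1 or R_{T,n} = R(T) for all n ≥ 1. Then ind(S,T) = dim N(S)/(N(S)∩R(T)) − dim N(T)/(N(T)∩R(S)). -/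
open Module

/-!
Writing `b = dim R(T)/(R(T) ∩ N(S))` and `d = dim R(S)/(R(S) ∩ N(T))`, the index is `a - c`
exactly when `b = d`. By the first isomorphism theorem `b = dim S(R(T)) = dim R_{S,2}` and
`d = dim T(R(S)) = dim R_{T,2}`. If `R_{S,n} = R(S)` for `n ≥ 1`, then `S(R(T)) = R(S)` is finite
dimensional and `S(T(R(S))) = R(S)`, so `dim R(S) ≤ dim T(R(S)) ≤ dim R(S)`, i.e. `b = d`.
The other alternative is the same argument with `S` and `T` exchanged.
-/

theorem Submodule.finrank_map_eq_of_map_map_eq {K V W : Type*} [DivisionRing K]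
    [AddCommGroup V] [Module K V] [AddCommGroup W] [Module K W]
    (f : V →ₗ[K] W) (g : W →ₗ[K] V) {U : Submodule K W} [FiniteDimensional K U]
    (hU : (U.map g).map f = U) : finrank K (U.map g) = finrank K U :=
  le_antisymm (Submodule.finrank_map_le g U)
    (calc finrank K U = finrank K ((U.map g).map f) := by rw [hU]
      _ ≤ finrank K (U.map g) := Submodule.finrank_map_le f _)

section

variable {X Y : Type*} [AddCommGroup X] [Module ℂ X] [AddCommGroup Y] [Module ℂ Y]

noncomputable def relQuotKerEquivMap (f : X →ₗ[ℂ] Y) (A : Submodule ℂ X) :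
    relQuot A (LinearMap.ker f) ≃ₗ[ℂ] A.map f :=
  (Submodule.quotEquivOfEq _ _ (LinearMap.ker_domRestrict A f).symm).trans
    ((f.domRestrict A).quotKerEquivRange.trans
      (LinearEquiv.ofEq _ _ (LinearMap.range_domRestrict A f)))

theorem relDim_ker_eq_finrank_map (f : X →ₗ[ℂ] Y) (A : Submodule ℂ X) :
    relDim A (LinearMap.ker f) = finrank ℂ (A.map f) :=
  (relQuotKerEquivMap f A).finrank_eq

theorem finiteDimensional_map_of_relQuot_ker (f : X →ₗ[ℂ] Y) (A : Submodule ℂ X)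
    [FiniteDimensional ℂ (relQuot A (LinearMap.ker f))] : FiniteDimensional ℂ (A.map f) :=
  (relQuotKerEquivMap f A).finiteDimensional

theorem relDim_range_ker_eq_of_map_eq (f : X →ₗ[ℂ] Y) (g : Y →ₗ[ℂ] X)
    [FiniteDimensional ℂ (relQuot (LinearMap.range g) (LinearMap.ker f))]
    (hfg : (LinearMap.range g).map f = LinearMap.range f)
    (hfgf : ((LinearMap.range f).map g).map f = LinearMap.range f) :
    relDim (LinearMap.range g) (LinearMap.ker f) = relDim (LinearMap.range f) (LinearMap.ker g) := by
  have : FiniteDimensional ℂ (LinearMap.range f) :=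
    hfg ▸ finiteDimensional_map_of_relQuot_ker f (LinearMap.range g)
  rw [relDim_ker_eq_finrank_map, relDim_ker_eq_finrank_map, hfg,
    Submodule.finrank_map_eq_of_map_map_eq f g hfgf]

theorem alternatingRange_two_three (f : X →ₗ[ℂ] Y) (g : Y →ₗ[ℂ] X)
    (Rf : ℕ → Submodule ℂ Y) (Rg : ℕ → Submodule ℂ X) (hRf0 : Rf 0 = ⊤) (hRg0 : Rg 0 = ⊤)
    (hRf : ∀ n, Rf (n + 1) = (Rg n).map f) (hRg : ∀ n, Rg (n + 1) = (Rf n).map g) :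
    Rf 2 = (LinearMap.range g).map f ∧ Rf 3 = ((LinearMap.range f).map g).map f := by
  refine ⟨?_, ?_⟩
  · rw [hRf, hRg, hRf0, Submodule.map_top]
  · rw [hRf, hRg, hRf, hRg0, Submodule.map_top]

end

theorem regularFredholmPair_number_one_index_general {X Y : Type*}
    [NormedAddCommGroup X] [NormedSpace ℂ X]
    [NormedAddCommGroup Y] [NormedSpace ℂ Y]
    (S : X →L[ℂ] Y) (T : Y →L[ℂ] X) (h : IsFredholmPair S T)
    (RS : ℕ → Submodule ℂ Y) (RT : ℕ → Submodule ℂ X)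
    (hRS0 : RS 0 = ⊤) (hRT0 : RT 0 = ⊤)
    (hRS : ∀ n, RS (n + 1) = Submodule.map (S : X →ₗ[ℂ] Y) (RT n))
    (hRT : ∀ n, RT (n + 1) = Submodule.map (T : Y →ₗ[ℂ] X) (RS n))
    (hnum : (∀ n, 1 ≤ n → RS n = LinearMap.range (S : X →ₗ[ℂ] Y)) ∨
      (∀ n, 1 ≤ n → RT n = LinearMap.range (T : Y →ₗ[ℂ] X))) :
    fpIndex S T = (relDim (LinearMap.ker (S : X →ₗ[ℂ] Y)) (LinearMap.range (T : Y →ₗ[ℂ] X)) : ℤ) -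
      (relDim (LinearMap.ker (T : Y →ₗ[ℂ] X)) (LinearMap.range (S : X →ₗ[ℂ] Y)) : ℤ) := by
  obtain ⟨-, hb, -, hd⟩ := h
  have hbd : relDim (LinearMap.range (T : Y →ₗ[ℂ] X)) (LinearMap.ker (S : X →ₗ[ℂ] Y))
      = relDim (LinearMap.range (S : X →ₗ[ℂ] Y)) (LinearMap.ker (T : Y →ₗ[ℂ] X)) := by
    rcases hnum with hA | hA
    · obtain ⟨h2, h3⟩ := alternatingRange_two_three _ _ RS RT hRS0 hRT0 hRS hRT
      exact relDim_range_ker_eq_of_map_eq _ _ (h2 ▸ hA 2 (by norm_num)) (h3 ▸ hA 3 (by norm_num))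
    · obtain ⟨h2, h3⟩ := alternatingRange_two_three _ _ RT RS hRT0 hRS0 hRT hRS
      exact (relDim_range_ker_eq_of_map_eq _ _ (h2 ▸ hA 2 (by norm_num))
        (h3 ▸ hA 3 (by norm_num))).symm
  rw [fpIndex, hbd]
  ring

/-- If the number of the regular Fredholm pair `(S,T)` is 1, i.e. `R_{S,n} = R(S)` for
all `n ≥ 1` or `R_{T,n} = R(T)` for all `n ≥ 1`, then
`ind (S,T) = dim N(S)/(N(S) ∩ R(T)) - dim N(T)/(N(T) ∩ R(S))`. -/
theorem regularFredholmPair_number_one_index {X Y : Type*}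
    [NormedAddCommGroup X] [NormedSpace ℂ X] [CompleteSpace X]
    [NormedAddCommGroup Y] [NormedSpace ℂ Y] [CompleteSpace Y]
    (S : X →L[ℂ] Y) (T : Y →L[ℂ] X) (h : IsFredholmPair S T)
    (hS : IsRegularOp S) (hT : IsRegularOp T)
    (RS : ℕ → Submodule ℂ Y) (RT : ℕ → Submodule ℂ X)
    (hRS0 : RS 0 = ⊤) (hRT0 : RT 0 = ⊤)
    (hRS : ∀ n, RS (n + 1) = Submodule.map (S : X →ₗ[ℂ] Y) (RT n))
    (hRT : ∀ n, RT (n + 1) = Submodule.map (T : Y →ₗ[ℂ] X) (RS n))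
    (hnum : (∀ n, 1 ≤ n → RS n = LinearMap.range (S : X →ₗ[ℂ] Y)) ∨
      (∀ n, 1 ≤ n → RT n = LinearMap.range (T : Y →ₗ[ℂ] X))) :
    fpIndex S T = (relDim (LinearMap.ker (S : X →ₗ[ℂ] Y)) (LinearMap.range (T : Y →ₗ[ℂ] X)) : ℤ) -
      (relDim (LinearMap.ker (T : Y →ₗ[ℂ] X)) (LinearMap.range (S : X →ₗ[ℂ] Y)) : ℤ) :=
  regularFredholmPair_number_one_index_general S T h RS RT hRS0 hRT0 hRS hRT hnum
end

section
/- Let X and Y be Banach spaces over ℂ and let S : X → Y, T : Y → X be bounded linear operators such that R(S∘T) and R(T∘S) are finite-dimensional subspaces of Y and X respectively. Then S maps R(T∘S) into R(S∘T) and T maps R(S∘T) into R(T∘S), so that S and T induce bounded linear operators S̄ : X/R(T∘S) → Y/R(S∘T) and T̄ : Y/R(S∘T) → X/R(T∘S) on the quotient Banach spaces. These satisfy S̄ ∘ T̄ = 0 and T̄ ∘ S̄ = 0; moreover N(S̄)/R(T̄) is linearly isomorphic to N(S)/(N(S)∩R(T)) and N(T̄)/R(S̄) is linearly isomorphic to N(T)/(N(T)∩R(S)).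 Consequently, (S,T) is a Fredholm pair if and only if (S̄,T̄) is a Fredholm symmetrical pair. -/
/-!
Since `R(T ∘ S) = T(R(S))` and `R(S ∘ T) = S(R(T))`, the operator `S` maps `R(T ∘ S)` into
`R(S ∘ T)` and so descends to a continuous `S̄` between the quotients, and symmetrically for `T`;
`S̄ ∘ T̄ = 0` because `S(T y) ∈ R(S ∘ T)`. The kernel of `S̄` is the image of
`S⁻¹(S(R(T))) = N(S) + R(T)` and the range of `T̄` is the image of `R(T) ⊇ R(T ∘ S)`, so
`N(S̄)/R(T̄) ≅ (N(S) + R(T))/R(T) ≅ N(S)/(N(S) ∩ R(T))`. Finally the dimensions `b` and `d` are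
finite for `(S, T)` because `R(T)/(N(S) ∩ R(T)) ≅ S(R(T)) = R(S ∘ T)`, and vanish for `(S̄, T̄)`.
-/

open Module

namespace Submodule

open LinearMap

variable {R M N : Type*} [Ring R] [AddCommGroup M] [Module R M] [AddCommGroup N] [Module R N]

lemma subsingleton_quotient_comap_subtype_of_le {p q : Submodule R M} (h : p ≤ q) :
    Subsingleton (↥p ⧸ q.comap p.subtype) :=
  Quotient.subsingleton_iff.2 (comap_subtype_eq_top.2 h)

noncomputable def quotComapKerEquivMap (p : Submodule R M) (f : M →ₗ[R] N) :
    (↥p ⧸ (ker f).comap p.subtype) ≃ₗ[R] ↥(p.map f) :=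
  (quotEquivOfEq _ _ (ker_domRestrict p f).symm).trans
    ((f.domRestrict p).quotKerEquivRange.trans (LinearEquiv.ofEq _ _ (range_domRestrict p f)))

/-- For `A ≤ U`, passing to `M ⧸ A` does not change `(U ⊔ V) / U ≅ V / (U ∩ V)`. -/
noncomputable def quotMapMkQSupEquiv {A U : Submodule R M} (V : Submodule R M) (hAU : A ≤ U) :
    (↥((U ⊔ V).map A.mkQ) ⧸ (U.map A.mkQ).comap ((U ⊔ V).map A.mkQ).subtype) ≃ₗ[R]
      (↥V ⧸ U.comap V.subtype) := by
  let φ : ↥V →ₗ[R] ↥((U ⊔ V).map A.mkQ) ⧸ (U.map A.mkQ).comap ((U ⊔ V).map A.mkQ).subtype :=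
    mkQ _ ∘ₗ codRestrict _ (A.mkQ ∘ₗ V.subtype) fun v => ⟨v, mem_sup_right v.2, rfl⟩
  have hker : ker φ = U.comap V.subtype := by
    ext v
    rw [mem_ker, mem_comap]
    refine (Quotient.mk_eq_zero _).trans ?_
    change A.mkQ (v : M) ∈ U.map A.mkQ ↔ _
    rw [← mem_comap, comap_map_mkQ, sup_eq_right.2 hAU, V.subtype_apply]
  have hsurj : Function.Surjective φ := by
    rintro ⟨⟨_, x, hx, rfl⟩⟩
    obtain ⟨u, hu, v, hv, rfl⟩ := mem_sup.1 hx
    refine ⟨⟨v, hv⟩, (Quotient.eq _).2 ⟨-u, neg_mem hu, ?_⟩⟩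
    change _ = A.mkQ v - A.mkQ (u + v)
    simp
  exact ((quotEquivOfEq _ _ hker.symm).trans (φ.quotKerEquivOfSurjective hsurj)).symm

end Submodule

namespace LinearMap

variable {R M N : Type*} [Ring R] [AddCommGroup M] [Module R M] [AddCommGroup N] [Module R N]
  (f : M →ₗ[R] N) (g : N →ₗ[R] M)

lemma map_range_comp_le_range_comp : (range (g ∘ₗ f)).map f ≤ range (f ∘ₗ g) := by
  rintro _ ⟨_, ⟨x, rfl⟩, rfl⟩
  exact ⟨f x, rfl⟩

def mapQRangeComp : M ⧸ range (g ∘ₗ f) →ₗ[R] N ⧸ range (f ∘ₗ g) :=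
  (range (g ∘ₗ f)).mapQ _ f (Submodule.map_le_iff_le_comap.1 (map_range_comp_le_range_comp f g))

noncomputable def kerMapQRangeCompQuotEquiv :
    (↥(ker (f.mapQRangeComp g)) ⧸
        (range (g.mapQRangeComp f)).comap (ker (f.mapQRangeComp g)).subtype) ≃ₗ[R]
      (↥(ker f) ⧸ (range g).comap (ker f).subtype) := by
  have hker : ker (f.mapQRangeComp g) = (range g ⊔ ker f).map (range (g ∘ₗ f)).mkQ := by
    rw [mapQRangeComp, Submodule.ker_mapQ, range_comp g f, Submodule.comap_map_eq]
  have hrange : range (g.mapQRangeComp f) = (range g).map (range (g ∘ₗ f)).mkQ :=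
    Submodule.range_mapQ _ _ _ _
  rw [hker, hrange]
  exact Submodule.quotMapMkQSupEquiv (ker f) (range_comp_le_range f g)

end LinearMap

section Topological

variable {R M N : Type*} [Ring R] [TopologicalSpace M] [AddCommGroup M] [Module R M]
  [TopologicalSpace N] [AddCommGroup N] [Module R N]

def Submodule.mapQL (p : Submodule R M) (q : Submodule R N) (f : M →L[R] N)
    (h : p ≤ q.comap (f : M →ₗ[R] N)) : M ⧸ p →L[R] N ⧸ q :=
  p.liftQL (q.mkQL.comp f) (by simpa [LinearMap.ker_comp] using h)

namespace ContinuousLinearMap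

variable (f : M →L[R] N) (g : N →L[R] M)

def mapQRangeComp :
    M ⧸ LinearMap.range (g.comp f : M →ₗ[R] M) →L[R] N ⧸ LinearMap.range (f.comp g : N →ₗ[R] N) :=
  Submodule.mapQL _ _ f
    (Submodule.map_le_iff_le_comap.1 (LinearMap.map_range_comp_le_range_comp (f : M →ₗ[R] N) g))

@[simp]
lemma mapQRangeComp_mk (x : M) :
    f.mapQRangeComp g (Submodule.Quotient.mk x) = Submodule.Quotient.mk (f x) := rfl

lemma mapQRangeComp_comp_mapQRangeComp : (g.mapQRangeComp f).comp (f.mapQRangeComp g) = 0 := by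
  ext z
  obtain ⟨x, rfl⟩ := Submodule.Quotient.mk_surjective _ z
  exact (Submodule.Quotient.mk_eq_zero _).2 ⟨x, rfl⟩

end ContinuousLinearMap

end Topological

section FredholmPair

open LinearMap

variable {X Y : Type*} [SeminormedAddCommGroup X] [NormedSpace ℂ X]
  [SeminormedAddCommGroup Y] [NormedSpace ℂ Y] (S : X →L[ℂ] Y) (T : Y →L[ℂ] X)

lemma isFredholmPair_iff_of_finiteDimensional
    (hb : FiniteDimensional ℂ (relQuot (range T.toLinearMap) (ker S.toLinearMap)))
    (hd : FiniteDimensional ℂ (relQuot (range S.toLinearMap) (ker T.toLinearMap))) :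
    IsFredholmPair S T ↔
      FiniteDimensional ℂ (relQuot (ker S.toLinearMap) (range T.toLinearMap)) ∧
      FiniteDimensional ℂ (relQuot (ker T.toLinearMap) (range S.toLinearMap)) := by
  unfold IsFredholmPair
  tauto

lemma isFredholmPair_iff_of_comp_eq_zero (hST : S.comp T = 0) (hTS : T.comp S = 0) :
    IsFredholmPair S T ↔
      FiniteDimensional ℂ (relQuot (ker S.toLinearMap) (range T.toLinearMap)) ∧
      FiniteDimensional ℂ (relQuot (ker T.toLinearMap) (range S.toLinearMap)) :=
  have := Submodule.subsingleton_quotient_comap_subtype_of_le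
    (range_le_ker_iff.2 (congrArg ContinuousLinearMap.toLinearMap hST))
  have := Submodule.subsingleton_quotient_comap_subtype_of_le
    (range_le_ker_iff.2 (congrArg ContinuousLinearMap.toLinearMap hTS))
  isFredholmPair_iff_of_finiteDimensional S T inferInstance inferInstance

lemma isFredholmPair_iff_of_finiteDimensional_range_comp
    (hST : FiniteDimensional ℂ (range (S.comp T).toLinearMap))
    (hTS : FiniteDimensional ℂ (range (T.comp S).toLinearMap)) :
    IsFredholmPair S T ↔
      FiniteDimensional ℂ (relQuot (ker S.toLinearMap) (range T.toLinearMap)) ∧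
      FiniteDimensional ℂ (relQuot (ker T.toLinearMap) (range S.toLinearMap)) := by
  rw [ContinuousLinearMap.toLinearMap_comp, range_comp] at hST hTS
  exact isFredholmPair_iff_of_finiteDimensional S T
    (Submodule.quotComapKerEquivMap _ _).symm.finiteDimensional
    (Submodule.quotComapKerEquivMap _ _).symm.finiteDimensional

end FredholmPair

theorem fredholmPair_iff_quotient_symmetrical_general {X Y : Type*}
    [NormedAddCommGroup X] [NormedSpace ℂ X]
    [NormedAddCommGroup Y] [NormedSpace ℂ Y]
    (S : X →L[ℂ] Y) (T : Y →L[ℂ] X)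
    (hST : FiniteDimensional ℂ ↥(LinearMap.range (S.comp T : Y →ₗ[ℂ] Y)))
    (hTS : FiniteDimensional ℂ ↥(LinearMap.range (T.comp S : X →ₗ[ℂ] X))) :
    Submodule.map (S : X →ₗ[ℂ] Y) (LinearMap.range (T.comp S : X →ₗ[ℂ] X)) ≤ LinearMap.range (S.comp T : Y →ₗ[ℂ] Y) ∧
    Submodule.map (T : Y →ₗ[ℂ] X) (LinearMap.range (S.comp T : Y →ₗ[ℂ] Y)) ≤ LinearMap.range (T.comp S : X →ₗ[ℂ] X) ∧
    ∃ (Sb : (X ⧸ LinearMap.range (T.comp S : X →ₗ[ℂ] X)) →L[ℂ] (Y ⧸ LinearMap.range (S.comp T : Y →ₗ[ℂ] Y)))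
      (Tb : (Y ⧸ LinearMap.range (S.comp T : Y →ₗ[ℂ] Y)) →L[ℂ] (X ⧸ LinearMap.range (T.comp S : X →ₗ[ℂ] X))),
      (∀ x : X, Sb (Submodule.Quotient.mk x) = Submodule.Quotient.mk (S x)) ∧
      (∀ y : Y, Tb (Submodule.Quotient.mk y) = Submodule.Quotient.mk (T y)) ∧
      Sb.comp Tb = 0 ∧ Tb.comp Sb = 0 ∧
      Nonempty (relQuot (LinearMap.ker Sb.toLinearMap) (LinearMap.range Tb.toLinearMap) ≃ₗ[ℂ]
        relQuot (LinearMap.ker (S : X →ₗ[ℂ] Y)) (LinearMap.range (T : Y →ₗ[ℂ] X))) ∧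
      Nonempty (relQuot (LinearMap.ker Tb.toLinearMap) (LinearMap.range Sb.toLinearMap) ≃ₗ[ℂ]
        relQuot (LinearMap.ker (T : Y →ₗ[ℂ] X)) (LinearMap.range (S : X →ₗ[ℂ] Y))) ∧
      (IsFredholmPair S T ↔ IsFredholmPair Sb Tb) := by
  have hSTS := T.mapQRangeComp_comp_mapQRangeComp S
  have hTST := S.mapQRangeComp_comp_mapQRangeComp T
  let eS := LinearMap.kerMapQRangeCompQuotEquiv S.toLinearMap T.toLinearMap
  let eT := LinearMap.kerMapQRangeCompQuotEquiv T.toLinearMap S.toLinearMap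
  refine ⟨LinearMap.map_range_comp_le_range_comp _ _, LinearMap.map_range_comp_le_range_comp _ _,
    S.mapQRangeComp T, T.mapQRangeComp S, S.mapQRangeComp_mk T, T.mapQRangeComp_mk S,
    hSTS, hTST, ⟨eS⟩, ⟨eT⟩, ?_⟩
  rw [isFredholmPair_iff_of_finiteDimensional_range_comp S T hST hTS,
    isFredholmPair_iff_of_comp_eq_zero _ _ hSTS hTST]
  exact and_congr (Module.Finite.equiv_iff eS).symm (Module.Finite.equiv_iff eT).symm

/-- Remark 5.1: if `R(S∘T)` and `R(T∘S)` are finite dimensional, then `S` and `T`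
induce bounded operators `S̄`, `T̄` between the quotient Banach spaces `X/R(T∘S)` and
`Y/R(S∘T)`, satisfying `S̄∘T̄ = 0`, `T̄∘S̄ = 0`, with `N(S̄)/R(T̄) ≅ N(S)/(N(S)∩R(T))`
and `N(T̄)/R(S̄) ≅ N(T)/(N(T)∩R(S))`; consequently `(S,T)` is a Fredholm pair iff
`(S̄,T̄)` is a Fredholm (symmetrical) pair. -/
theorem fredholmPair_iff_quotient_symmetrical {X Y : Type*}
    [NormedAddCommGroup X] [NormedSpace ℂ X] [CompleteSpace X]
    [NormedAddCommGroup Y] [NormedSpace ℂ Y] [CompleteSpace Y]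
    (S : X →L[ℂ] Y) (T : Y →L[ℂ] X)
    (hST : FiniteDimensional ℂ ↥(LinearMap.range (S.comp T : Y →ₗ[ℂ] Y)))
    (hTS : FiniteDimensional ℂ ↥(LinearMap.range (T.comp S : X →ₗ[ℂ] X))) :
    Submodule.map (S : X →ₗ[ℂ] Y) (LinearMap.range (T.comp S : X →ₗ[ℂ] X)) ≤ LinearMap.range (S.comp T : Y →ₗ[ℂ] Y) ∧
    Submodule.map (T : Y →ₗ[ℂ] X) (LinearMap.range (S.comp T : Y →ₗ[ℂ] Y)) ≤ LinearMap.range (T.comp S : X →ₗ[ℂ] X) ∧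
    ∃ (Sb : (X ⧸ LinearMap.range (T.comp S : X →ₗ[ℂ] X)) →L[ℂ] (Y ⧸ LinearMap.range (S.comp T : Y →ₗ[ℂ] Y)))
      (Tb : (Y ⧸ LinearMap.range (S.comp T : Y →ₗ[ℂ] Y)) →L[ℂ] (X ⧸ LinearMap.range (T.comp S : X →ₗ[ℂ] X))),
      (∀ x : X, Sb (Submodule.Quotient.mk x) = Submodule.Quotient.mk (S x)) ∧
      (∀ y : Y, Tb (Submodule.Quotient.mk y) = Submodule.Quotient.mk (T y)) ∧
      Sb.comp Tb = 0 ∧ Tb.comp Sb = 0 ∧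
      Nonempty (relQuot (LinearMap.ker Sb.toLinearMap) (LinearMap.range Tb.toLinearMap) ≃ₗ[ℂ]
        relQuot (LinearMap.ker (S : X →ₗ[ℂ] Y)) (LinearMap.range (T : Y →ₗ[ℂ] X))) ∧
      Nonempty (relQuot (LinearMap.ker Tb.toLinearMap) (LinearMap.range Sb.toLinearMap) ≃ₗ[ℂ]
        relQuot (LinearMap.ker (T : Y →ₗ[ℂ] X)) (LinearMap.range (S : X →ₗ[ℂ] Y))) ∧
      (IsFredholmPair S T ↔ IsFredholmPair Sb Tb) :=
  fredholmPair_iff_quotient_symmetrical_general S T hST hTS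
end

section
/- Let X and Y be Banach spaces over ℂ and let S : X → Y, T : Y → X be bounded linear operators such that (S,T) is a Fredholm pair. Let S̄ : X/R(T∘S) → Y/R(S∘T) and T̄ : Y/R(S∘T) → X/R(T∘S) be the operators induced by S and T on the quotient Banach spaces (these exist since R(S∘T) and R(T∘S) are finite-dimensional and S maps R(T∘S) into R(S∘T), T maps R(S∘T) into R(T∘S)). Then (S,T) is a regular Fredholm pair if and only if both S̄ and T̄ are regular operators (equivalently, (S̄,T̄) is a regular Fredholm symmetrical pair). -/
open Module

/-!
Finite-dimensional subspaces of a normed space are complemented, so the quotient maps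
`X → X ⧸ p` and `Y → Y ⧸ q` have bounded right inverses `σ`. If `S S' S = S`, then
`π_p S' σ` is a generalized inverse of `S̄`, because `S S'` fixes `R(S) ⊇ q`. Conversely a
generalized inverse of `S̄` lifts to `S₀` with `S - S S₀ S` taking values in the
finite-dimensional `q ⊆ R(S)`; adding `L P (1 - S S₀)`, with `P` a bounded projection onto `q`
and `L` a bounded right inverse of `S` on `q`, corrects `S₀` into a generalized inverse of `S`.
For `p = R(T S)` and `q = R(S T)` finite dimensionality comes from the Fredholm conditions,
since `R(S T) ≅ R(T) ⧸ (N(S) ∩ R(T))`.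
-/

section Regular

variable {X Y : Type*} [NormedAddCommGroup X] [NormedSpace ℂ X]
  [NormedAddCommGroup Y] [NormedSpace ℂ Y]

theorem Submodule.ClosedComplemented.exists_section_mkQ {q : Submodule ℂ Y}
    (hq : q.ClosedComplemented) : ∃ σ : Y ⧸ q →L[ℂ] Y, ∀ u, q.mkQ (σ u) = u := by
  obtain ⟨P, hP⟩ := hq
  have hker : q ≤ (ContinuousLinearMap.id ℂ Y - q.subtypeL.comp P).ker := fun y hy => by
    simp [hP ⟨y, hy⟩]
  refine ⟨q.liftQL _ hker, fun u => ?_⟩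
  obtain ⟨y, rfl⟩ := q.mkQ_surjective u
  change q.mkQ (y - P y) = q.mkQ y
  simp

theorem ContinuousLinearMap.exists_rightInverse_on_finiteDimensional (S : X →L[ℂ] Y)
    {q : Submodule ℂ Y} [FiniteDimensional ℂ q] (hq : q ≤ LinearMap.range (S : X →ₗ[ℂ] Y)) :
    ∃ L : q →L[ℂ] X, ∀ r : q, S (L r) = r := by
  obtain ⟨L, hL⟩ := Module.projective_lifting_property (S : X →ₗ[ℂ] Y).rangeRestrict
    (Submodule.inclusion hq) (LinearMap.surjective_rangeRestrict _)
  exact ⟨LinearMap.toContinuousLinearMap L,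
    fun r => congrArg Subtype.val (LinearMap.congr_fun hL r)⟩

theorem isRegularOp_of_comp_comp_sub_mem (S : X →L[ℂ] Y) (S₀ : Y →L[ℂ] X)
    {q : Submodule ℂ Y} [FiniteDimensional ℂ q] (hq : q ≤ LinearMap.range (S : X →ₗ[ℂ] Y))
    (hS₀ : ∀ x, S x - S (S₀ (S x)) ∈ q) : IsRegularOp S := by
  obtain ⟨P, hP⟩ := Submodule.ClosedComplemented.of_finiteDimensional q
  obtain ⟨L, hL⟩ := S.exists_rightInverse_on_finiteDimensional hq
  refine ⟨S₀ + L.comp (P.comp (.id ℂ Y - S.comp S₀)), ?_⟩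
  ext x
  have hcorr : S (L (P (S x - S (S₀ (S x))))) = S x - S (S₀ (S x)) := by
    rw [hP ⟨_, hS₀ x⟩, hL]
  simp only [add_apply, ContinuousLinearMap.comp_apply,
    sub_apply, ContinuousLinearMap.id_apply, map_add, hcorr]
  abel

variable {S : X →L[ℂ] Y} {p : Submodule ℂ X} {q : Submodule ℂ Y} {Sb : X ⧸ p →L[ℂ] Y ⧸ q}

theorem IsRegularOp.induced (hS : IsRegularOp S) (hq : q.ClosedComplemented)
    (hqS : q ≤ LinearMap.range (S : X →ₗ[ℂ] Y))
    (hSb : ∀ x, Sb (p.mkQ x) = q.mkQ (S x)) : IsRegularOp Sb := by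
  obtain ⟨S', hS'⟩ := hS
  obtain ⟨σ, hσ⟩ := hq.exists_section_mkQ
  have hfix : ∀ y ∈ LinearMap.range (S : X →ₗ[ℂ] Y), S (S' y) = y := by
    rintro _ ⟨z, rfl⟩
    exact congr($hS' z)
  refine ⟨p.mkQL.comp (S'.comp σ), ?_⟩
  ext1 u
  obtain ⟨x, rfl⟩ := p.mkQ_surjective u
  have hmem : σ (q.mkQ (S x)) ∈ LinearMap.range (S : X →ₗ[ℂ] Y) := by
    have hdiff : σ (q.mkQ (S x)) - S x ∈ q := (Submodule.Quotient.eq q).1 (hσ _)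
    simpa using add_mem (hqS hdiff) (LinearMap.mem_range_self (S : X →ₗ[ℂ] Y) x)
  change Sb (p.mkQ (S' (σ (Sb (p.mkQ x))))) = Sb (p.mkQ x)
  rw [hSb, hSb, hfix _ hmem, hσ]

theorem IsRegularOp.of_induced (hSb' : IsRegularOp Sb) (hp : p.ClosedComplemented)
    [FiniteDimensional ℂ q] (hqS : q ≤ LinearMap.range (S : X →ₗ[ℂ] Y))
    (hSb : ∀ x, Sb (p.mkQ x) = q.mkQ (S x)) : IsRegularOp S := by
  obtain ⟨Sb', hSb'⟩ := hSb'
  obtain ⟨σ, hσ⟩ := hp.exists_section_mkQ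
  refine isRegularOp_of_comp_comp_sub_mem S (σ.comp (Sb'.comp q.mkQL)) hqS fun x => ?_
  refine (Submodule.Quotient.eq q).1 ?_
  calc q.mkQ (S x) = Sb (p.mkQ x) := (hSb x).symm
    _ = Sb (Sb' (Sb (p.mkQ x))) := congr($hSb' (p.mkQ x)).symm
    _ = q.mkQ (S (σ (Sb' (q.mkQ (S x))))) := by rw [← hSb, hσ, hSb]

theorem isRegularOp_iff_isRegularOp_induced (hp : p.ClosedComplemented) [FiniteDimensional ℂ q]
    (hqS : q ≤ LinearMap.range (S : X →ₗ[ℂ] Y))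
    (hSb : ∀ x, Sb (p.mkQ x) = q.mkQ (S x)) : IsRegularOp S ↔ IsRegularOp Sb :=
  ⟨fun hS => hS.induced (.of_finiteDimensional q) hqS hSb, fun h => h.of_induced hp hqS hSb⟩

end Regular

theorem LinearMap.finiteDimensional_range_comp_of_relQuot {M N P : Type*}
    [AddCommGroup M] [Module ℂ M] [AddCommGroup N] [Module ℂ N] [AddCommGroup P] [Module ℂ P]
    (f : N →ₗ[ℂ] P) (g : M →ₗ[ℂ] N) [FiniteDimensional ℂ (relQuot (range g) (ker f))] :
    FiniteDimensional ℂ (range (f ∘ₗ g)) := by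
  rw [range_comp]
  exact Module.Finite.equiv <|
    (Submodule.quotEquivOfEq _ _ (ker_domRestrict (range g) f).symm).trans <|
      (f.domRestrict (range g)).quotKerEquivRange.trans (.ofEq _ _ (range_domRestrict _ f))

theorem regularFredholmPair_iff_quotient_regular_general {X Y : Type*}
    [NormedAddCommGroup X] [NormedSpace ℂ X]
    [NormedAddCommGroup Y] [NormedSpace ℂ Y]
    (S : X →L[ℂ] Y) (T : Y →L[ℂ] X) (h : IsFredholmPair S T)
    (Sb : (X ⧸ LinearMap.range ((T.comp S : X →L[ℂ] X) : X →ₗ[ℂ] X)) →L[ℂ] (Y ⧸ LinearMap.range ((S.comp T : Y →L[ℂ] Y) : Y →ₗ[ℂ] Y)))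
    (Tb : (Y ⧸ LinearMap.range ((S.comp T : Y →L[ℂ] Y) : Y →ₗ[ℂ] Y)) →L[ℂ] (X ⧸ LinearMap.range ((T.comp S : X →L[ℂ] X) : X →ₗ[ℂ] X)))
    (hSb : ∀ x : X, Sb (Submodule.Quotient.mk x) = Submodule.Quotient.mk (S x))
    (hTb : ∀ y : Y, Tb (Submodule.Quotient.mk y) = Submodule.Quotient.mk (T y)) :
    (IsRegularOp S ∧ IsRegularOp T) ↔ (IsRegularOp Sb ∧ IsRegularOp Tb) := by
  obtain ⟨-, hRT, -, hRS⟩ := h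
  have : FiniteDimensional ℂ (LinearMap.range ((S.comp T : Y →L[ℂ] Y) : Y →ₗ[ℂ] Y)) := by
    rw [ContinuousLinearMap.toLinearMap_comp]
    exact LinearMap.finiteDimensional_range_comp_of_relQuot _ _
  have : FiniteDimensional ℂ (LinearMap.range ((T.comp S : X →L[ℂ] X) : X →ₗ[ℂ] X)) := by
    rw [ContinuousLinearMap.toLinearMap_comp]
    exact LinearMap.finiteDimensional_range_comp_of_relQuot _ _
  exact and_congr
    (isRegularOp_iff_isRegularOp_induced (.of_finiteDimensional _)
      (LinearMap.range_comp_le_range _ _) hSb)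
    (isRegularOp_iff_isRegularOp_induced (.of_finiteDimensional _)
      (LinearMap.range_comp_le_range _ _) hTb)

/-- Theorem 5.2: a Fredholm pair `(S,T)` is a regular Fredholm pair if and only if the
induced pair `(S̄,T̄)` on the quotients `X/R(T∘S)`, `Y/R(S∘T)` is a regular (Fredholm
symmetrical) pair, i.e. both `S̄` and `T̄` are regular operators. -/
theorem regularFredholmPair_iff_quotient_regular {X Y : Type*}
    [NormedAddCommGroup X] [NormedSpace ℂ X] [CompleteSpace X]
    [NormedAddCommGroup Y] [NormedSpace ℂ Y] [CompleteSpace Y]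
    (S : X →L[ℂ] Y) (T : Y →L[ℂ] X) (h : IsFredholmPair S T)
    (Sb : (X ⧸ LinearMap.range ((T.comp S : X →L[ℂ] X) : X →ₗ[ℂ] X)) →L[ℂ] (Y ⧸ LinearMap.range ((S.comp T : Y →L[ℂ] Y) : Y →ₗ[ℂ] Y)))
    (Tb : (Y ⧸ LinearMap.range ((S.comp T : Y →L[ℂ] Y) : Y →ₗ[ℂ] Y)) →L[ℂ] (X ⧸ LinearMap.range ((T.comp S : X →L[ℂ] X) : X →ₗ[ℂ] X)))
    (hSb : ∀ x : X, Sb (Submodule.Quotient.mk x) = Submodule.Quotient.mk (S x))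
    (hTb : ∀ y : Y, Tb (Submodule.Quotient.mk y) = Submodule.Quotient.mk (T y)) :
    (IsRegularOp S ∧ IsRegularOp T) ↔ (IsRegularOp Sb ∧ IsRegularOp Tb) :=
  regularFredholmPair_iff_quotient_regular_general S T h Sb Tb hSb hTb
end
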